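/- arXiv:2603.17537 — 14 statements merged into one kernel-verified Lean document; each statement's English description precedes it below -/
import Mathlib

section
/- For every i ∈ [1,n], let next[i] = min{j ∈ (i,n] : x_j ≺ x_i} if this set is nonempty, and next[i] = n+1 otherwise. Then next[i] = i + λ[i], where λ[i] is the largest m ∈ [1, n−i+1] such that x[i..i+m−1] is a Lyndon word. -/
namespace LynArr

variable {α : Type*} [LinearOrder α]

/-- Strict lexicographic order on words:
`u ≺ v` iff `u` is a proper prefix of `v`, or at the first differing position `u` is smaller. -/
def Llt (u v : List α) : Prop := List.Lex (· < ·) u v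

/-- The suffix `x_i = x[i..n]` (1-based indexing). -/
def suff (x : List α) (i : ℕ) : List α := x.drop (i - 1)

/-- The subword `x[i..j]` (1-based, inclusive). -/
def sub (x : List α) (i j : ℕ) : List α := (x.drop (i - 1)).take (j - i + 1)

/-- `w` is a Lyndon word: nonempty and lexicographically smaller than
all of its nonempty proper suffixes. -/
def IsLyndon (w : List α) : Prop :=
  w ≠ [] ∧ ∀ k, 0 < k → k < w.length → Llt w (w.drop k)

/-- `w` is an inverse Lyndon word: nonempty and lexicographically greater than
all of its nonempty proper suffixes. -/
def IsInvLyndon (w : List α) : Prop :=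
  w ≠ [] ∧ ∀ k, 0 < k → k < w.length → Llt (w.drop k) w

/-- `lce x i j`: the length of the longest common prefix of the suffixes `x_i` and `x_j`. -/
def lce (x : List α) (i j : ℕ) : ℕ :=
  (((suff x i).zip (suff x j)).takeWhile fun p => p.1 == p.2).length

open Classical in
/-- `next[i]`: the smallest `j ∈ (i, n]` with `x_j ≺ x_i`, or `n + 1` if no such `j` exists. -/
noncomputable def nextSmaller (x : List α) (i : ℕ) : ℕ :=
  if ∃ j, i < j ∧ j ≤ x.length ∧ Llt (suff x j) (suff x i) then
    sInf {j | i < j ∧ j ≤ x.length ∧ Llt (suff x j) (suff x i)}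
  else x.length + 1

private lemma getD_drop' (s : List α) (k j : ℕ) (d : α) :
    (s.drop k).getD j d = s.getD (k + j) d := by
  rcases lt_or_ge (k + j) s.length with h | h
  · rw [List.getD_eq_getElem _ _ (by simp; omega), List.getD_eq_getElem _ _ h,
      List.getElem_drop]
  · rw [List.getD_eq_default _ _ (by simp; omega), List.getD_eq_default _ _ h]

private lemma getD_take' (s : List α) (k j : ℕ) (d : α) (h : j < k) :
    (s.take k).getD j d = s.getD j d := by
  rcases lt_or_ge j s.length with h2 | h2
  · rw [List.getD_eq_getElem _ _ (by simp; omega), List.getD_eq_getElem _ _ h2,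
      List.getElem_take]
  · rw [List.getD_eq_default _ _ (by simp; omega), List.getD_eq_default _ _ h2]

private lemma lex_of_mismatch (d : α) :
    ∀ (j : ℕ) (u v : List α), j < u.length → j < v.length →
    (∀ j' < j, u.getD j' d = v.getD j' d) → u.getD j d < v.getD j d →
    List.Lex (· < ·) u v := by
  intro j
  induction j with
  | zero =>
    intro u v hu hv _ hlt
    rcases u with _ | ⟨a, u⟩
    · simp at hu
    rcases v with _ | ⟨b, v⟩
    · simp at hv
    exact List.Lex.rel (by simpa using hlt)
  | succ j ih =>
    intro u v hu hv heq hlt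
    rcases u with _ | ⟨a, u⟩
    · simp at hu
    rcases v with _ | ⟨b, v⟩
    · simp at hv
    have h0 := heq 0 (by omega)
    simp only [List.getD_cons_zero] at h0
    subst h0
    exact List.Lex.cons (ih u v (by simp at hu; omega) (by simp at hv; omega)
      (fun j' hj' => by simpa using heq (j' + 1) (by omega))
      (by simpa using hlt))

private lemma mismatch_of_lex (d : α) {u v : List α} (h : List.Lex (· < ·) u v)
    (hlen : v.length ≤ u.length) :
    ∃ j, j < v.length ∧ (∀ j' < j, u.getD j' d = v.getD j' d) ∧
      u.getD j d < v.getD j d := by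
  induction h with
  | nil => simp at hlen
  | @rel a₁ l₁ a₂ l₂ hab =>
    exact ⟨0, by simp, fun j' hj' => absurd hj' (by omega), by simpa using hab⟩
  | @cons a l₁ l₂ h ih =>
    obtain ⟨j, hj, heq, hlt⟩ := ih (by simpa using hlen)
    refine ⟨j + 1, by simp; omega, fun j' hj' => ?_, by simpa using hlt⟩
    rcases j' with _ | j'
    · simp
    · simpa using heq j' (by omega)

/-- Part A: if the prefix of length `m` of `s` is Lyndon, then `s` is smaller than
each of its suffixes `s.drop k` for `0 < k < m`. -/
private lemma lyndon_lt_drop (s : List α) (d : α) (m : ℕ) (hm : 0 < m) (hms : m ≤ s.length)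
    (hL : IsLyndon (s.take m)) {k : ℕ} (hk0 : 0 < k) (hkm : k < m) :
    List.Lex (· < ·) s (s.drop k) := by
  have hw := hL.2 k hk0 (by rw [List.length_take]; omega)
  obtain ⟨p, hp, heq, hlt⟩ := mismatch_of_lex d hw (by simp)
  have hp' : p < m - k := by simp [List.length_take] at hp; omega
  have key : ∀ a, a < m → (s.take m).getD a d = s.getD a d := fun a ha => getD_take' s m a d ha
  apply lex_of_mismatch d p s (s.drop k) (by omega) (by simp; omega)
  · intro j' hj'
    have h9 := heq j' hj'
    rw [key j' (by omega), getD_drop', key (k + j') (by omega)] at h9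
    rw [getD_drop']
    exact h9
  · have h9 := hlt
    rw [key p (by omega), getD_drop', key (k + p) (by omega)] at h9
    rw [getD_drop']
    exact h9

/-- Duval-type extension: if `s.take m` is Lyndon, `s` agrees with period `m`
up to position `m+t-1` and has a strictly larger letter at position `m+t`,
then `s.take (m+t+1)` is Lyndon. -/
private lemma ext_lyndon (s : List α) (d : α) (m t : ℕ) (hm : 0 < m) (hts : m + t < s.length)
    (hL : IsLyndon (s.take m))
    (hper : ∀ j < t, s.getD j d = s.getD (m + j) d)
    (hlt : s.getD t d < s.getD (m + t) d) :
    IsLyndon (s.take (m + t + 1)) := by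
  set f : ℕ → α := fun a => s.getD a d with hf
  have hmod : ∀ a, a < m + t → f a = f (a % m) := by
    intro a
    induction a using Nat.strong_induction_on with
    | _ a ih =>
      intro ha
      rcases lt_or_ge a m with h | h
      · rw [Nat.mod_eq_of_lt h]
      · have e1 : f (a - m) = f a := by
          have h2 := hper (a - m) (by omega)
          have h3 : m + (a - m) = a := by omega
          rw [h3] at h2
          exact h2
        have e2 : f (a - m) = f ((a - m) % m) := ih (a - m) (by omega) (by omega)
        have e3 : (a - m) % m = a % m := by
          conv_rhs => rw [← Nat.sub_add_cancel h]
          rw [Nat.add_mod_right]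
        rw [← e1, e2, e3]
  have hfin : f ((m + t) % m) < f (m + t) := by
    have h1 : (m + t) % m = t % m := Nat.add_mod_left m t
    rw [h1, ← hmod t (by omega)]
    exact hlt
  have hwa : ∀ a, a < m → (s.take m).getD a d = f a := fun a ha => getD_take' s m a d ha
  have hua : ∀ a, a < m + t + 1 → (s.take (m + t + 1)).getD a d = f a :=
    fun a ha => getD_take' s (m + t + 1) a d ha
  have hulen : (s.take (m + t + 1)).length = m + t + 1 := by
    rw [List.length_take]; omega
  constructor
  · intro h
    have := congrArg List.length h
    rw [hulen] at this
    simp at this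
  · intro k hk0 hkL
    rw [hulen] at hkL
    have hkt : k ≤ m + t := by omega
    -- abbreviations
    set u := s.take (m + t + 1) with hu
    have hvget : ∀ j', k + j' < m + t + 1 → (u.drop k).getD j' d = f (k + j') := by
      intro j' hj'
      rw [getD_drop', hua (k + j') hj']
    rcases Nat.eq_zero_or_pos (k % m) with hr | hr
    · -- k is a multiple of m
      apply lex_of_mismatch d (m + t - k) u (u.drop k) (by omega) (by simp [hulen]; omega)
      · intro j' hj'
        rw [hua j' (by omega), hvget j' (by omega), hmod j' (by omega),
          hmod (k + j') (by omega)]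
        congr 1
        rw [Nat.add_mod, hr]
        simp
      · have e4 : k + (m + t - k) = m + t := by omega
        rw [hua (m + t - k) (by omega), hvget (m + t - k) (by omega), e4,
          hmod (m + t - k) (by omega)]
        have e5 : (m + t - k) % m = (m + t) % m := by
          conv_rhs => rw [← e4]
          rw [Nat.add_mod, hr]
          simp [Nat.mod_mod_of_dvd]
        rw [e5]
        exact hfin
    · -- k mod m = r > 0
      set r := k % m with hrdef
      have hrm : r < m := Nat.mod_lt _ hm
      have hww := hL.2 r hr (by rw [List.length_take]; omega)
      obtain ⟨p, hp, heqw, hltw⟩ := mismatch_of_lex d hww (by simp)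
      have hp' : p < m - r := by simp [List.length_take] at hp; omega
      have heqw' : ∀ j' < p, f j' = f (r + j') := by
        intro j' hj'
        have h6 := heqw j' hj'
        rwa [hwa j' (by omega), getD_drop', hwa (r + j') (by omega)] at h6
      have hltw' : f p < f (r + p) := by
        have h6 := hltw
        rwa [hwa p (by omega), getD_drop', hwa (r + p) (by omega)] at h6
      set j := min p (m + t - k) with hj
      have hjp : j ≤ p := min_le_left _ _
      have hjk : k + j ≤ m + t := by omega
      have hmodr : ∀ a, a ≤ p → (k + a) % m = r + a := by
        intro a ha
        rw [Nat.add_mod, ← hrdef, Nat.mod_eq_of_lt (by omega : a < m),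
          Nat.mod_eq_of_lt (by omega : r + a < m)]
      apply lex_of_mismatch d j u (u.drop k) (by omega) (by simp [hulen]; omega)
      · intro j' hj'
        rw [hua j' (by omega), hvget j' (by omega), hmod (k + j') (by omega),
          hmodr j' (by omega)]
        exact heqw' j' (by omega)
      · rw [hua j (by omega), hvget j (by omega)]
        have hle : f j ≤ f (r + j) := by
          rcases lt_or_eq_of_le hjp with h7 | h7
          · exact le_of_eq (heqw' j h7)
          · rw [h7]; exact hltw'.le
        rcases lt_or_eq_of_le hjk with h8 | h8
        · -- k + j < m + t, so j = p
          have hjp' : j = p := by omega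
          rw [hmod (k + j) (by omega), hmodr j hjp, hjp']
          exact hltw'
        · -- k + j = m + t
          calc f j ≤ f (r + j) := hle
            _ = f ((m + t) % m) := by rw [← h8, hmodr j hjp]
            _ < f (m + t) := hfin
            _ = f (k + j) := by rw [h8]

/-- Part B: if `s.take m` is the longest Lyndon prefix and `m < s.length`,
then the suffix `s.drop m` is smaller than `s`. -/
private lemma drop_lt_of_max (s : List α) (d : α) (m : ℕ) (hm : 0 < m) (hms : m < s.length)
    (hL : IsLyndon (s.take m))
    (hmax : ∀ m', m < m' → m' ≤ s.length → ¬ IsLyndon (s.take m')) :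
    List.Lex (· < ·) (s.drop m) s := by
  by_contra hcon
  have hne : s = s.drop m → False := by
    intro h
    have := congrArg List.length h
    simp at this
    omega
  have h1 : List.Lex (· < ·) s (s.drop m) := by
    have trich : List.Lex (· < ·) s (s.drop m) ∨ s = s.drop m ∨
        List.Lex (· < ·) (s.drop m) s := trichotomous_of _ _ _
    rcases trich with h | h | h
    · exact h
    · exact absurd h hne
    · exact absurd h hcon
  obtain ⟨t, ht, heq, hlt⟩ := mismatch_of_lex d h1 (by simp)
  have ht' : t < s.length - m := by simpa using ht
  refine hmax (m + t + 1) (by omega) (by omega) (ext_lyndon s d m t hm (by omega) hL ?_ ?_)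
  · intro j hj
    have := heq j hj
    rwa [getD_drop'] at this
  · have := hlt
    rwa [getD_drop'] at this

/-- If `m = λ[i]` is the largest `m ∈ [1, n - i + 1]` such that `x[i..i+m-1]` is a
Lyndon word, then `next[i] = i + λ[i]`. -/
theorem nextSmaller_eq_add_lyndonArray {α : Type*} [LinearOrder α] (x : List α) (n i m : ℕ)
    (hn : n = x.length) (hi1 : 1 ≤ i) (hin : i ≤ n)
    (hm1 : 1 ≤ m) (hm2 : m ≤ n - i + 1)
    (hL : IsLyndon (sub x i (i + m - 1)))
    (hmax : ∀ m', m < m' → m' ≤ n - i + 1 → ¬ IsLyndon (sub x i (i + m' - 1))) :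
    nextSmaller x i = i + m := by
  set s : List α := x.drop (i - 1) with hs
  have slen : s.length = n - i + 1 := by
    rw [hs, List.length_drop]; omega
  have hne : s ≠ [] := List.ne_nil_of_length_pos (by omega)
  set d : α := s.head hne with hd
  have hLs : IsLyndon (s.take m) := by
    have e : i + m - 1 - i + 1 = m := by omega
    simp only [sub, e] at hL
    exact hL
  have hmax' : ∀ m', m < m' → m' ≤ s.length → ¬ IsLyndon (s.take m') := by
    intro m' h1 h2 h3
    have e : i + m' - 1 - i + 1 = m' := by omega
    refine hmax m' h1 (by omega) ?_
    simpa only [sub, e] using h3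
  have hsuff : ∀ j, i ≤ j → suff x j = s.drop (j - i) := by
    intro j hj
    rw [hs, suff, List.drop_drop]
    congr 1
    omega
  have hsi : suff x i = s := by
    rw [hsuff i le_rfl]
    simp
  have hA : ∀ j, i < j → j < i + m → ¬ Llt (suff x j) (suff x i) := by
    intro j h1 h2 hllt
    rw [hsuff j (by omega), hsi] at hllt
    have hgt : List.Lex (· < ·) s (s.drop (j - i)) :=
      lyndon_lt_drop s d m (by omega) (by omega) hLs (k := j - i) (by omega) (by omega)
    exact asymm hgt hllt
  rcases lt_or_eq_of_le hm2 with hcase | hcase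
  · -- i + m ≤ n
    have hB : Llt (suff x (i + m)) (suff x i) := by
      rw [hsuff (i + m) (by omega), hsi]
      have e : i + m - i = m := by omega
      rw [e]
      exact drop_lt_of_max s d m (by omega) (by omega) hLs hmax'
    have hmem : i + m ∈ {j | i < j ∧ j ≤ x.length ∧ Llt (suff x j) (suff x i)} :=
      ⟨by omega, by omega, hB⟩
    rw [nextSmaller, if_pos ⟨i + m, hmem⟩]
    have hinf_mem := Nat.sInf_mem (⟨i + m, hmem⟩ :
      {j | i < j ∧ j ≤ x.length ∧ Llt (suff x j) (suff x i)}.Nonempty)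
    obtain ⟨hq1, hq2, hq3⟩ := hinf_mem
    have hle : sInf {j | i < j ∧ j ≤ x.length ∧ Llt (suff x j) (suff x i)} ≤ i + m :=
      Nat.sInf_le hmem
    by_contra hcon
    exact hA _ hq1 (by omega) hq3
  · -- i + m = n + 1 : no smaller suffix exists
    rw [nextSmaller, if_neg]
    · omega
    · rintro ⟨j, h1, h2, h3⟩
      exact hA j h1 (by omega) h3

end LynArr
end

section
/- Let 2 ≤ i ≤ n and suppose the set {j ∈ [1,i) : x_j ≺ x_i} is nonempty, with maximum p. Then the subword x[p..i−1] is a Lyndon word. -/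
namespace LynArr

variable {α : Type*} [LinearOrder α]

/-
If `x_p = w x_i` with `w = x[p..i-1]` and `p < j < i`, maximality of `p` forces `x_i ≺ x_j`,
hence `w x_i ≺ x_i ≺ x_j = (w.drop (j - p)) x_i`. Either this already gives `w ≺ w.drop (j - p)`,
or `v = w.drop (j - p)` is a proper prefix of `w = v t`; cancelling `v` yields `t x_i ≺ x_i`,
and `t x_i` is the suffix starting at `p + |v| ∈ (p, i)`, contradicting maximality again.
-/

theorem lt_of_append_lt_append_left {c a b : List α} (h : c ++ a < c ++ b) : a < b := by
  by_contra hab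
  exact List.append_left_le (List.not_lt.mp hab) h

theorem lt_or_prefix_of_append_lt_append_right :
    ∀ {u v : List α} (s : List α), u ++ s < v ++ s → u < v ∨ v <+: u
  | [], [], _, _ => Or.inr (List.prefix_refl _)
  | [], _ :: _, _, _ => Or.inl List.Lex.nil
  | _ :: _, [], _, _ => Or.inr List.nil_prefix
  | a :: u, b :: v, s, h => by
    rcases List.cons_lt_cons_iff.mp h with hab | ⟨rfl, htail⟩
    · exact Or.inl (List.Lex.rel hab)
    · rcases lt_or_prefix_of_append_lt_append_right s htail with huv | hvu
      · exact Or.inl (List.Lex.cons huv)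
      · exact Or.inr ((List.prefix_cons_inj a).mpr hvu)

theorem isLyndon_of_append_lt {w s : List α} (hw : w ≠ []) (hws : w ++ s < s)
    (hsuf : ∀ k, 0 < k → k < w.length → s < w.drop k ++ s) : IsLyndon w := by
  refine ⟨hw, fun k hk0 hkw => ?_⟩
  have hlt : w ++ s < w.drop k ++ s := hws.trans (hsuf k hk0 hkw)
  rcases lt_or_prefix_of_append_lt_append_right s hlt with hlt | ⟨t, hvt⟩
  · exact hlt
  · set v := w.drop k
    have hv : v.length = w.length - k := List.length_drop
    have hts : t ++ s < s := by
      rw [← hvt, List.append_assoc] at hlt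
      exact lt_of_append_lt_append_left (by simpa using hlt)
    have hdrop : w.drop v.length = t := by rw [← hvt, List.drop_left]
    exact ((hsuf v.length (by omega) (by omega)).not_gt (hdrop ▸ hts)).elim

omit [LinearOrder α] in
theorem suff_eq_sub_append_suff (x : List α) {i j : ℕ} (hj : 1 ≤ j) (hji : j < i) :
    suff x j = sub x j (i - 1) ++ suff x i := by
  unfold suff sub
  rw [show i - 1 - j + 1 = i - j by omega]
  conv_lhs => rw [← List.take_append_drop (i - j) (x.drop (j - 1))]
  rw [List.drop_drop, show j - 1 + (i - j) = i - 1 by omega]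

omit [LinearOrder α] in
theorem sub_drop (x : List α) {i j k : ℕ} (hj : 1 ≤ j) (hjk : j + k ≤ i) :
    (sub x j i).drop k = sub x (j + k) i := by
  unfold sub
  rw [List.drop_take, List.drop_drop, show j - 1 + k = j + k - 1 by omega,
    show i - j + 1 - k = i - (j + k) + 1 by omega]

theorem sub_prevSmaller_isLyndon_general {α : Type*} [LinearOrder α] (x : List α) (i p : ℕ)
    (hp : IsGreatest {j | 1 ≤ j ∧ j < i ∧ Llt (suff x j) (suff x i)} p) :
    IsLyndon (sub x p (i - 1)) := by
  obtain ⟨⟨hp1, hpi, hlt⟩, hmax⟩ := hp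
  have hsplit := suff_eq_sub_append_suff x hp1 hpi
  refine isLyndon_of_append_lt ?_ (hsplit ▸ hlt) fun k hk0 hkw => ?_
  · rintro hnil
    rw [hnil, List.nil_append] at hsplit
    exact lt_irrefl _ (hsplit ▸ hlt : suff x i < suff x i)
  · have hpki : p + k < i := by
      have := List.length_take_le (i - 1 - p + 1) (x.drop (p - 1))
      unfold sub at hkw
      omega
    have hsplit_k : suff x (p + k) = (sub x p (i - 1)).drop k ++ suff x i := by
      rw [sub_drop x hp1 (by omega), suff_eq_sub_append_suff x (by omega) hpki]
    have hne : suff x i ≠ suff x (p + k) := by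
      rw [hsplit_k]
      intro h
      exact List.drop_eq_nil_iff.not.mpr (by omega) (List.append_left_eq_self.mp h.symm)
    rw [← hsplit_k]
    refine lt_of_le_of_ne (not_lt.mp fun h => ?_) hne
    have := hmax ⟨by omega, hpki, h⟩
    omega

/-- If `p = prev[i]` is the greatest `j ∈ [1, i)` with `x_j ≺ x_i`, then
`x[p..i-1]` is a Lyndon word. -/
theorem sub_prevSmaller_isLyndon {α : Type*} [LinearOrder α] (x : List α) (n i p : ℕ)
    (hn : n = x.length) (hi2 : 2 ≤ i) (hin : i ≤ n)
    (hp : IsGreatest {j | 1 ≤ j ∧ j < i ∧ Llt (suff x j) (suff x i)} p) :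
    IsLyndon (sub x p (i - 1)) :=
  sub_prevSmaller_isLyndon_general x i p hp

end LynArr
end

section
/- (Non-crossing of NSS/PSS edges.) Let l₁ < r₁ and l₂ < r₂ be pairs of indices in [1,n] such that, for each t ∈ {1,2} and every k with l_t < k < r_t, the suffix x_k satisfies x_k ≻ x_{l_t} and x_k ≻ x_{r_t} (this holds whenever l_t and r_t are connected by a next-smaller-suffix or previous-smaller-suffix edge). Then it is impossible that l₁ < l₂ < r₁ < r₂. -/
namespace LynArr

variable {α : Type*} [LinearOrder α]

theorem nss_pss_noncrossing_general {α : Type*} [LinearOrder α] (x : List α) (l₁ r₁ l₂ r₂ : ℕ)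
    (he₁ : ∀ k, l₁ < k → k < r₁ → Llt (suff x l₁) (suff x k) ∧ Llt (suff x r₁) (suff x k))
    (he₂ : ∀ k, l₂ < k → k < r₂ → Llt (suff x l₂) (suff x k) ∧ Llt (suff x r₂) (suff x k)) :
    ¬ (l₁ < l₂ ∧ l₂ < r₁ ∧ r₁ < r₂) := by
  rintro ⟨hl, hm, hr⟩
  exact (List.Lex.asymm (· < · : α → α → Prop)).asymm _ _ (he₁ l₂ hl hm).2 (he₂ r₁ hm hr).1

/-- Non-crossing of NSS/PSS edges: if for each pair `(lₜ, rₜ)` every suffix strictly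
between the endpoints is lexicographically greater than both endpoint suffixes, then the
configuration `l₁ < l₂ < r₁ < r₂` is impossible. -/
theorem nss_pss_noncrossing {α : Type*} [LinearOrder α] (x : List α) (n l₁ r₁ l₂ r₂ : ℕ)
    (hn : n = x.length)
    (hl₁ : 1 ≤ l₁) (hlr₁ : l₁ < r₁) (hr₁ : r₁ ≤ n)
    (hl₂ : 1 ≤ l₂) (hlr₂ : l₂ < r₂) (hr₂ : r₂ ≤ n)
    (he₁ : ∀ k, l₁ < k → k < r₁ → Llt (suff x l₁) (suff x k) ∧ Llt (suff x r₁) (suff x k))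
    (he₂ : ∀ k, l₂ < k → k < r₂ → Llt (suff x l₂) (suff x k) ∧ Llt (suff x r₂) (suff x k)) :
    ¬ (l₁ < l₂ ∧ l₂ < r₁ ∧ r₁ < r₂) :=
  nss_pss_noncrossing_general x l₁ r₁ l₂ r₂ he₁ he₂

end LynArr
end

section
/- (LCE acceleration, standard setting.) Let 1 ≤ l < k < r ≤ n be indices such that x_l ≺ x_k and x_m ≻ x_k for all m ∈ (l,k), and x_r ≺ x_k and x_m ≻ x_k for all m ∈ (k,r) (i.e., l = prev[k] and r = next[k]). Then: (1) if lce(l,k) = lce(k,r), then lce(l,r) ≥ lce(k,r); (2) if lce(l,k) < lce(k,r), then lce(l,r) = lce(l,k), x_r ≻ x_l, and max{j ∈ [1,r) : x_j ≺ x_r} = l; (3) if lce(l,k) > lce(k,r), then lce(l,r) = lce(k,r), x_r ≺ x_l, and min{j ∈ (l,n] : x_j ≺ x_l} = r. -/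
namespace LynArr

variable {α : Type*} [LinearOrder α]

/-- The length of the longest common prefix of two words. -/
def lcpLen (u v : List α) : ℕ :=
  ((u.zip v).takeWhile fun p => p.1 == p.2).length

lemma lce_eq_lcpLen (x : List α) (i j : ℕ) : lce x i j = lcpLen (suff x i) (suff x j) := rfl

@[simp] lemma lcpLen_nil_left (v : List α) : lcpLen ([] : List α) v = 0 := rfl

@[simp] lemma lcpLen_nil_right (u : List α) : lcpLen u ([] : List α) = 0 := by
  simp [lcpLen]

@[simp] lemma lcpLen_cons (a b : α) (u v : List α) :
    lcpLen (a :: u) (b :: v) = if a = b then lcpLen u v + 1 else 0 := by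
  by_cases h : a = b <;> simp [lcpLen, List.takeWhile_cons, h]

/-- Ultrametric inequality for lcp lengths. -/
lemma lcpLen_ultra (u v w : List α) :
    min (lcpLen u v) (lcpLen v w) ≤ lcpLen u w := by
  induction u generalizing v w with
  | nil => simp
  | cons a u ih =>
    cases v with
    | nil => simp
    | cons b v =>
      cases w with
      | nil => simp
      | cons c w =>
        by_cases hab : a = b
        · by_cases hbc : b = c
          · have := ih v w
            simp [hab, hbc, hab.trans hbc]
            omega
          · simp [hbc]
        · simp [hab]

lemma llt_trans {u v w : List α} (h1 : Llt u v) (h2 : Llt v w) : Llt u w :=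
  show List.Lex (· < ·) u w from
    List.lex_trans (fun h₁ h₂ => lt_trans h₁ h₂) (show List.Lex (· < ·) u v from h1) (show List.Lex (· < ·) v w from h2)

lemma llt_asymm {u v : List α} (h1 : Llt u v) : ¬ Llt v u := fun h2 =>
  absurd (show List.Lex (· < ·) v u from h2) (asymm (show List.Lex (· < ·) u v from h1))

lemma key2 (u v w : List α) (h1 : List.Lex (· < ·) u v) (h2 : List.Lex (· < ·) w v)
    (h3 : lcpLen u v < lcpLen v w) :
    List.Lex (· < ·) u w ∧ lcpLen u w = lcpLen u v := by
  induction u generalizing v w with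
  | nil =>
    cases v with
    | nil => simp at h3
    | cons b v =>
      cases w with
      | nil => simp at h3
      | cons c w => exact ⟨List.Lex.nil, rfl⟩
  | cons a u ih =>
    cases v with
    | nil => exact absurd h1 (by intro h; cases h)
    | cons b v =>
      cases w with
      | nil => simp at h3
      | cons c w =>
        have hbc : b = c := by
          by_contra hbc
          simp [hbc] at h3
        subst hbc
        cases h1 with
        | rel hab =>
          have hab' : a ≠ b := ne_of_lt hab
          exact ⟨List.Lex.rel hab, by simp [hab']⟩
        | cons h1' =>
          have h2' : List.Lex (· < ·) w v := by
            cases h2 with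
            | rel hcb => exact absurd hcb (lt_irrefl _)
            | cons h => exact h
          have h3' : lcpLen u v < lcpLen v w := by
            simp at h3; omega
          obtain ⟨hl, he⟩ := ih v w h1' h2' h3'
          exact ⟨List.Lex.cons hl, by simp [he]⟩

lemma key3 (u v w : List α) (h1 : List.Lex (· < ·) u v) (h2 : List.Lex (· < ·) w v)
    (h3 : lcpLen v w < lcpLen u v) :
    List.Lex (· < ·) w u ∧ lcpLen u w = lcpLen v w := by
  induction u generalizing v w with
  | nil => simp at h3
  | cons a u ih =>
    cases v with
    | nil => exact absurd h1 (by intro h; cases h)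
    | cons b v =>
      have hab : a = b := by
        by_contra hab
        simp [hab] at h3
      subst hab
      cases w with
      | nil => exact ⟨List.Lex.nil, by simp⟩
      | cons c w =>
        cases h2 with
        | rel hcb =>
          have hca : a ≠ c := (ne_of_lt hcb).symm
          exact ⟨List.Lex.rel hcb, by simp [hca]⟩
        | cons h2' =>
          have h1' : List.Lex (· < ·) u v := by
            cases h1 with
            | rel h => exact absurd h (lt_irrefl a)
            | cons h => exact h
          have h3' : lcpLen v w < lcpLen u v := by
            simp at h3; omega
          obtain ⟨hl, he⟩ := ih v w h1' h2' h3'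
          exact ⟨List.Lex.cons hl, by simp [he]⟩

/-- LCE acceleration in the standard (NSS/PSS) setting, with `l = prev[k]` and
`r = next[k]`. -/
theorem lce_acceleration_standard {α : Type*} [LinearOrder α] (x : List α) (n l k r : ℕ)
    (hn : n = x.length)
    (hl1 : 1 ≤ l) (hlk : l < k) (hkr : k < r) (hrn : r ≤ n)
    (hlk : Llt (suff x l) (suff x k))
    (hlk' : ∀ m, l < m → m < k → Llt (suff x k) (suff x m))
    (hkr' : Llt (suff x r) (suff x k))
    (hkr'' : ∀ m, k < m → m < r → Llt (suff x k) (suff x m)) :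
    (lce x l k = lce x k r → lce x k r ≤ lce x l r) ∧
    (lce x l k < lce x k r →
      lce x l r = lce x l k ∧ Llt (suff x l) (suff x r) ∧
        IsGreatest {j | 1 ≤ j ∧ j < r ∧ Llt (suff x j) (suff x r)} l) ∧
    (lce x k r < lce x l k →
      lce x l r = lce x k r ∧ Llt (suff x r) (suff x l) ∧
        IsLeast {j | l < j ∧ j ≤ n ∧ Llt (suff x j) (suff x l)} r) := by
  have hlknat : l < k := ‹l < k›
  have hlr : l < r := hlknat.trans hkr
  simp only [lce_eq_lcpLen] at *
  refine ⟨?_, ?_, ?_⟩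
  · intro heq
    have := lcpLen_ultra (suff x l) (suff x k) (suff x r)
    omega
  · intro hlt
    obtain ⟨hL, hE⟩ := key2 (suff x l) (suff x k) (suff x r) hlk hkr' hlt
    refine ⟨hE, hL, ⟨hl1, hlr, hL⟩, ?_⟩
    rintro j ⟨hj1, hjr, hjL⟩
    by_contra hjl
    push_neg at hjl
    rcases lt_trichotomy j k with hjk | hjk | hjk
    · have h1 : Llt (suff x k) (suff x j) := hlk' j hjl hjk
      have h2 : Llt (suff x r) (suff x j) := llt_trans hkr' h1
      exact absurd hjL (llt_asymm h2)
    · subst hjk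
      exact absurd hjL (llt_asymm hkr')
    · have h1 : Llt (suff x k) (suff x j) := hkr'' j hjk hjr
      have h2 : Llt (suff x r) (suff x j) := llt_trans hkr' h1
      exact absurd hjL (llt_asymm h2)
  · intro hlt
    obtain ⟨hL, hE⟩ := key3 (suff x l) (suff x k) (suff x r) hlk hkr' hlt
    refine ⟨hE, hL, ⟨hlr, hrn, hL⟩, ?_⟩
    rintro j ⟨hjl, hjn, hjL⟩
    by_contra hjr
    push_neg at hjr
    rcases lt_trichotomy j k with hjk | hjk | hjk
    · have h1 : Llt (suff x k) (suff x j) := hlk' j hjl hjk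
      have h2 : Llt (suff x l) (suff x j) := llt_trans hlk h1
      exact absurd hjL (llt_asymm h2)
    · subst hjk
      exact absurd hjL (llt_asymm hlk)
    · have h1 : Llt (suff x k) (suff x j) := hkr'' j hjk hjr
      have h2 : Llt (suff x l) (suff x j) := llt_trans hlk h1
      exact absurd hjL (llt_asymm h2)

end LynArr
end

section
/- Every nonempty prefix of an inverse Lyndon word is an inverse Lyndon word. -/
namespace LynArr

variable {α : Type*} [LinearOrder α]

/-! If `w = p ++ t`, the suffix of `w` at `k < |p|` is `p.drop k ++ t`. Since `p.drop k` is shorter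
than `p`, its comparison with `p ++ t` is already decided before `t` is reached. -/

theorem _root_.List.Lex.of_append_of_length_lt {β : Type*} {r : β → β → Prop} :
    ∀ {u v x y : List β}, List.Lex r (u ++ x) (v ++ y) → u.length < v.length → List.Lex r u v
  | [], _ :: _, _, _, _, _ => .nil
  | a :: u, b :: v, x, y, h, hlen => by
    rcases List.cons_lex_cons_iff.mp h with hab | ⟨rfl, htail⟩
    · exact .rel hab
    · exact .cons (of_append_of_length_lt htail (by simpa using hlen))

/-- Every nonempty prefix of an inverse Lyndon word is an inverse Lyndon word. -/
theorem isInvLyndon_of_prefix {α : Type*} [LinearOrder α] (w p : List α)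
    (hw : IsInvLyndon w) (hp : p ≠ []) (hpre : p <+: w) :
    IsInvLyndon p := by
  refine ⟨hp, fun k hk hkp => ?_⟩
  obtain ⟨t, rfl⟩ := hpre
  have hsuff : Llt ((p ++ t).drop k) (p ++ t) :=
    hw.2 k hk (by rw [List.length_append]; omega)
  rw [Llt, List.drop_append_of_le_length hkp.le] at hsuff
  exact hsuff.of_append_of_length_lt (by rw [List.length_drop]; omega)

end LynArr
end

section
/- (Border via LCE.) Let 1 ≤ i ≤ n, let m = λ⁻¹[i], and let z = x[i..i+m−1] be the maximal inverse Lyndon subword starting at i. Assume i + m − 1 < n, and let j = min{j' ∈ (i,n] : x_{j'} ≻ x_i} (which exists). Then lce(i,j) = border(z). -/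
namespace List

variable {α : Type*}

theorem eq_take_append_getElem_cons_drop (l : List α) {i : ℕ} (hi : i < l.length) :
    l = l.take i ++ l[i] :: l.drop (i + 1) := by
  rw [getElem_cons_drop, take_append_drop]

theorem length_takeWhile_beq_zip_append_cons [BEq α] [LawfulBEq α] (c : List α)
    {a b : α} (hab : a ≠ b) (s t : List α) :
    (((c ++ a :: s).zip (c ++ b :: t)).takeWhile fun p => p.1 == p.2).length = c.length := by
  induction c with
  | nil => simp [hab]
  | cons d c ih => simpa [takeWhile_cons] using ih

variable [LinearOrder α]

theorem append_lt_append_of_lt_of_not_prefix {u v : List α} (h : u < v) (hp : ¬ u <+: v)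
    (s t : List α) : u ++ s < v ++ t := by
  induction h with
  | nil => exact absurd nil_prefix hp
  | rel hab => exact Lex.rel hab
  | cons _ ih => exact Lex.cons (ih fun h => hp ((prefix_cons_inj _).2 h))

theorem lt_of_append_lt_append_left {c s t : List α} (h : c ++ s < c ++ t) : s < t := by
  induction c with
  | nil => exact h
  | cons a c ih => exact ih (by simpa [cons_lt_cons_iff] using h)

end List

namespace LynArr

variable {α : Type*}

theorem sub_eq_take_suff (x : List α) {i m : ℕ} (hm : 1 ≤ m) :
    sub x i (i + m - 1) = (suff x i).take m := by
  simp only [sub, suff]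
  congr 1
  omega

theorem suff_add (x : List α) {i : ℕ} (hi : 1 ≤ i) (k : ℕ) :
    suff x (i + k) = (suff x i).drop k := by
  simp only [suff, List.drop_drop]
  congr 1
  omega

def IsBorder (z : List α) (b : ℕ) : Prop := z.take b = z.drop (z.length - b)

theorem isBorder_of_drop_prefix {z : List α} {k : ℕ} (hk : k ≤ z.length) (h : z.drop k <+: z) :
    IsBorder z (z.length - k) := by
  have h' := List.prefix_iff_eq_take.1 h
  rw [List.length_drop] at h'
  rw [IsBorder, ← h', Nat.sub_sub_self hk]

theorem IsBorder.take_drop_eq {z : List α} {l b : ℕ} (hl : IsBorder z l) (hb : IsBorder z b)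
    (hlb : l ≤ b) (hbz : b ≤ z.length) : (z.drop (b - l)).take l = z.take l := by
  have h := congrArg (List.drop (b - l)) hb
  rw [List.drop_take, List.drop_drop, Nat.sub_sub_self hlb,
    show z.length - b + (b - l) = z.length - l by omega] at h
  rw [h, hl]

theorem drop_sub_eq_of_isBorder {p : List α} {m b : ℕ} (hmp : m < p.length) (hbm : b ≤ m)
    (hb : IsBorder (p.take m) b) : p.drop (m - b) = p.take b ++ p[m] :: p.drop (m + 1) := by
  have hprefix : (p.drop (m - b)).take b = p.take b := by
    have h := hb.symm
    rwa [List.length_take_of_le hmp.le, List.drop_take, Nat.sub_sub_self hbm, List.take_take,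
      min_eq_left hbm] at h
  have hsuffix : (p.drop (m - b)).drop b = p[m] :: p.drop (m + 1) := by
    rw [List.drop_drop, Nat.sub_add_cancel hbm, List.drop_eq_getElem_cons hmp]
  rw [← hprefix, ← hsuffix, List.take_append_drop]

theorem length_takeWhile_zip_drop_sub_of_isBorder [BEq α] [LawfulBEq α] {p : List α} {m b : ℕ}
    (hmp : m < p.length) (hbm : b ≤ m) (hb : IsBorder (p.take m) b) (hne : p[b] ≠ p[m]) :
    ((p.zip (p.drop (m - b))).takeWhile fun q => q.1 == q.2).length = b := by
  have h := List.length_takeWhile_beq_zip_append_cons (p.take b) hne (p.drop (b + 1))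
    (p.drop (m + 1))
  rwa [← List.eq_take_append_getElem_cons_drop p (by omega), List.length_take_of_le (by omega),
    ← drop_sub_eq_of_isBorder hmp hbm hb] at h

variable [LinearOrder α]

theorem lt_drop_sub_of_isBorder {p : List α} {m b : ℕ} (hmp : m < p.length) (hbm : b ≤ m)
    (hb : IsBorder (p.take m) b) (hlt : p[b] < p[m]) : p < p.drop (m - b) := by
  rw [drop_sub_eq_of_isBorder hmp hbm hb]
  exact (List.eq_take_append_getElem_cons_drop p (by omega)).trans_lt
    (List.append_left_lt (List.Lex.rel hlt))

theorem IsInvLyndon.drop_lt {z : List α} (hz : IsInvLyndon z) {k : ℕ} (hk0 : 0 < k)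
    (hk : k ≤ z.length) : z.drop k < z := by
  rcases hk.lt_or_eq with hk | rfl
  · exact hz.2 k hk0 hk
  · obtain ⟨a, l, rfl⟩ := List.exists_cons_of_ne_nil hz.1
    simp

theorem IsInvLyndon.getElem_le_of_isBorder {z : List α} (hz : IsInvLyndon z) {l b : ℕ}
    (hl : IsBorder z l) (hb : IsBorder z b) (hlb : l < b) (hbz : b < z.length) :
    z[b] ≤ z[l] := by
  by_contra! hlt
  have hshift : z.drop (b - l) = z.take l ++ z[b] :: z.drop (b + 1) := by
    have hdrop : z.drop b = (z.drop (b - l)).drop l := by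
      rw [List.drop_drop, Nat.sub_add_cancel hlb.le]
    rw [← hl.take_drop_eq hb hlb.le hbz.le, ← List.drop_eq_getElem_cons hbz, hdrop,
      List.take_append_drop]
  refine lt_asymm (hz.drop_lt (k := b - l) (by omega) (by omega)) ?_
  rw [hshift]
  exact (List.eq_take_append_getElem_cons_drop z (hlb.trans hbz)).trans_lt
    (List.append_left_lt (List.Lex.rel hlt))

theorem IsInvLyndon.exists_isBorder_getElem_lt {z : List α} (hz : IsInvLyndon z) {a : α}
    (hza : ¬ IsInvLyndon (z ++ [a])) :
    ∃ l, ∃ hl : l < z.length, IsBorder z l ∧ z[l] < a := by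
  obtain ⟨k, hk0, hkz, hk⟩ : ∃ k, 0 < k ∧ k < z.length + 1 ∧ ¬ (z ++ [a]).drop k < z ++ [a] := by
    simpa [IsInvLyndon, Llt] using hza
  replace hkz : k ≤ z.length := by omega
  rw [List.drop_append_of_le_length hkz] at hk
  have hlt : z ++ [a] < z.drop k ++ [a] := by
    refine (lt_or_gt_of_ne fun h => ?_).resolve_right hk
    have := congrArg List.length h
    simp only [List.length_append, List.length_drop, List.length_singleton] at this
    omega
  have hpre : z.drop k <+: z := by
    by_contra hpre
    exact hk (List.append_lt_append_of_lt_of_not_prefix (hz.drop_lt hk0 hkz) hpre _ _)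
  have hl : z.length - k < z.length := by omega
  refine ⟨z.length - k, hl, isBorder_of_drop_prefix hkz hpre, ?_⟩
  have hdrop : z.drop k = z.take (z.length - k) := by
    simpa using List.prefix_iff_eq_take.1 hpre
  rw [hdrop] at hlt
  have hcons : z.take (z.length - k) ++ z[z.length - k] :: (z.drop (z.length - k + 1) ++ [a]) <
      z.take (z.length - k) ++ [a] := by
    rwa [← List.cons_append, ← List.append_assoc, ← List.eq_take_append_getElem_cons_drop z hl]
  simpa [List.cons_lt_cons_iff] using List.lt_of_append_lt_append_left hcons

theorem IsInvLyndon.getElem_lt_of_isBorder_of_not_append {z : List α} (hz : IsInvLyndon z)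
    {a : α} (hza : ¬ IsInvLyndon (z ++ [a])) {b : ℕ} (hbz : b < z.length) (hb : IsBorder z b)
    (hmax : ∀ b' < z.length, IsBorder z b' → b' ≤ b) : z[b] < a := by
  obtain ⟨l, hl, hlb, hla⟩ := hz.exists_isBorder_getElem_lt hza
  rcases (hmax l hl hlb).lt_or_eq with hlt | rfl
  · exact (hz.getElem_le_of_isBorder hlb hb hlt hbz).trans_lt hla
  · exact hla

theorem not_lt_drop_of_lt_sub_border {p : List α} {m b k : ℕ} (hmp : m ≤ p.length)
    (hz : IsInvLyndon (p.take m)) (hmax : ∀ b' < m, IsBorder (p.take m) b' → b' ≤ b)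
    (hk0 : 0 < k) (hkb : k < m - b) : ¬ p < p.drop k := by
  intro hlt
  have hzlen : (p.take m).length = m := List.length_take_of_le hmp
  by_cases hpre : (p.take m).drop k <+: p.take m
  · have hborder := isBorder_of_drop_prefix (by omega) hpre
    rw [hzlen] at hborder
    have := hmax (m - k) (by omega) hborder
    omega
  · have hdrop : (p.take m).drop k ++ p.drop m = p.drop k := by
      rw [List.drop_take, show p.drop m = (p.drop k).drop (m - k) by
        rw [List.drop_drop]; congr 1; omega, List.take_append_drop]
    have := List.append_lt_append_of_lt_of_not_prefix (hz.drop_lt hk0 (by omega)) hpre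
      (p.drop m) (p.drop m)
    rw [hdrop, List.take_append_drop] at this
    exact lt_asymm hlt this

theorem getElem_border_lt_getElem_of_not_isInvLyndon {p : List α} {m b : ℕ} (hmp : m < p.length)
    (hz : IsInvLyndon (p.take m)) (hnext : ¬ IsInvLyndon (p.take (m + 1))) (hbm : b < m)
    (hb : IsBorder (p.take m) b) (hmax : ∀ b' < m, IsBorder (p.take m) b' → b' ≤ b) :
    p[b] < p[m] := by
  have hzlen : (p.take m).length = m := List.length_take_of_le hmp.le
  rw [List.take_add_one, List.getElem?_eq_getElem hmp, Option.toList_some] at hnext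
  have h := hz.getElem_lt_of_isBorder_of_not_append hnext (by omega) hb (by rwa [hzlen])
  rwa [List.getElem_take] at h

theorem border_eq_lce_general {α : Type*} [LinearOrder α] (x : List α) (n i m b j : ℕ)
    (hn : n = x.length) (hi1 : 1 ≤ i) (hm1 : 1 ≤ m)
    (hIL : IsInvLyndon (sub x i (i + m - 1)))
    (hmax : ∀ m', m < m' → m' ≤ n - i + 1 → ¬ IsInvLyndon (sub x i (i + m' - 1)))
    (hproper : i + m - 1 < n)
    (hb1 : b < (sub x i (i + m - 1)).length)
    (hb2 : (sub x i (i + m - 1)).take b =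
      (sub x i (i + m - 1)).drop ((sub x i (i + m - 1)).length - b))
    (hb3 : ∀ b', b' < (sub x i (i + m - 1)).length →
      (sub x i (i + m - 1)).take b' =
        (sub x i (i + m - 1)).drop ((sub x i (i + m - 1)).length - b') → b' ≤ b)
    (hj : IsLeast {j' | i < j' ∧ j' ≤ n ∧ Llt (suff x i) (suff x j')} j) :
    lce x i j = b := by
  rw [sub_eq_take_suff x hm1] at hIL hb1 hb2 hb3
  set p := suff x i
  have hmp : m < p.length := by simp only [p, suff, List.length_drop]; omega
  have hzlen : (p.take m).length = m := List.length_take_of_le hmp.le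
  rw [hzlen] at hb1
  replace hb3 : ∀ b' < m, IsBorder (p.take m) b' → b' ≤ b := fun b' hb' => hb3 b' (by omega)
  have hnext : ¬ IsInvLyndon (p.take (m + 1)) := by
    rw [← sub_eq_take_suff x (by omega)]
    exact hmax (m + 1) (by omega) (by omega)
  have hkey := getElem_border_lt_getElem_of_not_isInvLyndon hmp hIL hnext hb1 hb2 hb3
  have hj_eq : j = i + (m - b) := by
    refine hj.unique ⟨⟨by omega, by omega, ?_⟩, fun j' ⟨hij', _, hj'⟩ => ?_⟩
    · rw [Llt, suff_add x hi1]
      exact lt_drop_sub_of_isBorder hmp hb1.le hb2 hkey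
    obtain ⟨k, rfl⟩ := Nat.exists_eq_add_of_le hij'.le
    rw [Llt, suff_add x hi1] at hj'
    by_contra! hk
    exact not_lt_drop_of_lt_sub_border hmp.le hIL hb3 (by omega) (by omega) hj'
  rw [hj_eq, lce, suff_add x hi1]
  exact length_takeWhile_zip_drop_sub_of_isBorder hmp hb1.le hb2 hkey.ne

/-- Border via LCE: if `z = x[i..i+m-1]` is the maximal inverse Lyndon subword starting
at `i`, `z` is a proper prefix of `x_i`, `b = border(z)`, and `j = next₋₁[i]` is the smallest
`j' ∈ (i, n]` with `x_{j'} ≻ x_i`, then `lce(i, j) = border(z)`. -/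
theorem border_eq_lce {α : Type*} [LinearOrder α] (x : List α) (n i m b j : ℕ)
    (hn : n = x.length) (hi1 : 1 ≤ i) (hin : i ≤ n)
    (hm1 : 1 ≤ m) (hm2 : m ≤ n - i + 1)
    (hIL : IsInvLyndon (sub x i (i + m - 1)))
    (hmax : ∀ m', m < m' → m' ≤ n - i + 1 → ¬ IsInvLyndon (sub x i (i + m' - 1)))
    (hproper : i + m - 1 < n)
    (hb1 : b < (sub x i (i + m - 1)).length)
    (hb2 : (sub x i (i + m - 1)).take b =
      (sub x i (i + m - 1)).drop ((sub x i (i + m - 1)).length - b))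
    (hb3 : ∀ b', b' < (sub x i (i + m - 1)).length →
      (sub x i (i + m - 1)).take b' =
        (sub x i (i + m - 1)).drop ((sub x i (i + m - 1)).length - b') → b' ≤ b)
    (hj : IsLeast {j' | i < j' ∧ j' ≤ n ∧ Llt (suff x i) (suff x j')} j) :
    lce x i j = b :=
  border_eq_lce_general x n i m b j hn hi1 hm1 hIL hmax hproper hb1 hb2 hb3 hj

end LynArr
end

section
/- Let 1 ≤ i ≤ n with λ⁻¹[i] < n − i + 1 (the maximal inverse Lyndon subword starting at i is a proper prefix of x_i), and let j = min{j' ∈ (i,n] : x_{j'} ≻ x_i} (which exists). Then λ⁻¹[i] = j − i + lce(i,j). -/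
namespace LynArr

variable {α : Type*} [LinearOrder α]

theorem not_lex_nil (u : List α) : ¬ Llt u ([] : List α) := by
  intro h; cases h

theorem lex_of_prefix (u : List α) : ∀ (v : List α), u <+: v → u.length < v.length → Llt u v := by
  induction u with
  | nil =>
    intro v _ hl
    cases v with
    | nil => simp at hl
    | cons b t => exact List.Lex.nil
  | cons a u ih =>
    intro v hp hl
    obtain ⟨t, rfl⟩ := hp
    rw [List.cons_append]
    exact List.Lex.cons (ih (u ++ t) ⟨t, rfl⟩ (by simp at hl ⊢; omega))

theorem not_lex_of_prefix (v : List α) : ∀ (u : List α), v <+: u → ¬ Llt u v := by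
  induction v with
  | nil => intro u _; exact not_lex_nil u
  | cons b v ih =>
    intro u hp h
    obtain ⟨t, rfl⟩ := hp
    rw [List.cons_append] at h
    cases h with
    | rel h => exact lt_irrefl _ h
    | cons h => exact ih (v ++ t) ⟨t, rfl⟩ h

theorem lex_of_diff (p : ℕ) : ∀ (u v : List α), (∀ t, t < p → u[t]? = v[t]?) →
    ∀ a b, u[p]? = some a → v[p]? = some b → a < b → Llt u v := by
  induction p with
  | zero =>
    intro u v _ a b hu hv hab
    cases u with
    | nil => simp at hu
    | cons a' u =>
      cases v with
      | nil => simp at hv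
      | cons b' v =>
        simp at hu hv
        subst hu; subst hv
        exact List.Lex.rel hab
  | succ p ih =>
    intro u v h a b hu hv hab
    cases u with
    | nil => simp at hu
    | cons a' u =>
      cases v with
      | nil => simp at hv
      | cons b' v =>
        have h0 := h 0 (Nat.succ_pos p)
        simp at h0
        subst h0
        simp only [List.getElem?_cons_succ] at hu hv
        exact List.Lex.cons (ih u v (fun t ht => by
          have := h (t+1) (by omega)
          simpa using this) a b hu hv hab)

theorem not_lex_of_diff (p : ℕ) : ∀ (u v : List α), (∀ t, t < p → u[t]? = v[t]?) →
    ∀ a b, u[p]? = some a → v[p]? = some b → b < a → ¬ Llt u v := by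
  induction p with
  | zero =>
    intro u v _ a b hu hv hba h
    cases u with
    | nil => simp at hu
    | cons a' u =>
      cases v with
      | nil => simp at hv
      | cons b' v =>
        simp at hu hv
        subst hu; subst hv
        cases h with
        | rel h => exact absurd h (not_lt.2 hba.le)
        | cons h => exact lt_irrefl _ hba
  | succ p ih =>
    intro u v h a b hu hv hba hL
    cases u with
    | nil => simp at hu
    | cons a' u =>
      cases v with
      | nil => simp at hv
      | cons b' v =>
        have h0 := h 0 (Nat.succ_pos p)
        simp at h0
        subst h0
        simp only [List.getElem?_cons_succ] at hu hv
        cases hL with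
        | rel h' => exact lt_irrefl _ h'
        | cons h' =>
          exact ih u v (fun t ht => by
            have := h (t+1) (by omega)
            simpa using this) a b hu hv hba h'

theorem prefix_of_agree (u : List α) : ∀ (v : List α),
    (∀ t, t < u.length → u[t]? = v[t]?) → u <+: v := by
  induction u with
  | nil => intro v _; exact List.nil_prefix
  | cons a u ih =>
    intro v h
    have h0 := h 0 (by simp)
    cases v with
    | nil => simp at h0
    | cons b v =>
      simp at h0
      subst h0
      rw [List.cons_prefix_cons]
      refine ⟨rfl, ih v fun t ht => ?_⟩
      have := h (t+1) (by simp; omega)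
      simpa using this

def lceLen (u v : List α) : ℕ := ((u.zip v).takeWhile fun p => p.1 == p.2).length

theorem lceLen_spec (u : List α) : ∀ (v : List α),
    (∀ t, t < lceLen u v → u[t]? = v[t]?) ∧ lceLen u v ≤ u.length ∧ lceLen u v ≤ v.length ∧
    (lceLen u v < u.length → lceLen u v < v.length → u[lceLen u v]? ≠ v[lceLen u v]?) := by
  induction u with
  | nil => intro v; simp [lceLen]
  | cons a u ih =>
    intro v
    cases v with
    | nil => simp [lceLen]
    | cons b v =>
      by_cases hab : a = b
      · have hL : lceLen (a :: u) (b :: v) = lceLen u v + 1 := by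
          simp [lceLen, List.takeWhile_cons, hab]
        obtain ⟨ih1, ih2, ih3, ih4⟩ := ih v
        refine ⟨?_, ?_, ?_, ?_⟩
        · intro t ht
          rw [hL] at ht
          cases t with
          | zero => simp [hab]
          | succ t => simp only [List.getElem?_cons_succ]; exact ih1 t (by omega)
        · rw [hL]; simp; omega
        · rw [hL]; simp; omega
        · rw [hL]
          intro h1 h2
          simp only [List.getElem?_cons_succ]
          exact ih4 (by simpa using h1) (by simpa using h2)
      · have hL : lceLen (a :: u) (b :: v) = 0 := by
          simp [lceLen, List.takeWhile_cons, hab]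
        refine ⟨by omega, by omega, by omega, ?_⟩
        rw [hL]
        intro _ _
        simp [hab]


theorem key (s : List α) (k l m : ℕ) (hk1 : 0 < k) (hkL : k < s.length)
    (hlt : Llt s (s.drop k))
    (hmin : ∀ q, 0 < q → q < s.length → Llt s (s.drop q) → k ≤ q)
    (hl : l = lceLen s (s.drop k)) (hm1 : 0 < m) (hmL : m ≤ s.length)
    (hIL : IsInvLyndon (s.take m))
    (hmax : ∀ m', m < m' → m' ≤ s.length → ¬ IsInvLyndon (s.take m')) :
    m = k + l := by
  set L := s.length with hLdef
  -- Step 0: facts about l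
  obtain ⟨sp1, sp2, sp3, sp4⟩ := lceLen_spec s (s.drop k)
  rw [← hl] at sp1 sp2 sp3 sp4
  rw [List.length_drop] at sp3 sp4
  have hagree : ∀ t, t < l → s[t]? = s[k + t]? := by
    intro t ht
    rw [← List.getElem?_drop]
    exact sp1 t ht
  have hlk : l < L - k := by
    by_contra hcon
    have hleq : l = L - k := by omega
    have hpre : s.drop k <+: s := by
      apply prefix_of_agree
      intro t ht
      rw [List.length_drop] at ht
      rw [List.getElem?_drop]
      exact (hagree t (by omega)).symm
    exact not_lex_of_prefix _ _ hpre hlt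
  have hklL : k + l < L := by omega
  have hlL : l < L := by omega
  have hdiff : s[l]? ≠ s[k + l]? := by
    have := sp4 (by omega) (by omega)
    rw [List.getElem?_drop] at this
    exact this
  have ha0 : s[l]? = some (s[l]'(by omega)) := List.getElem?_eq_getElem (by omega)
  have hb0 : s[k + l]? = some (s[k + l]'(by omega)) := List.getElem?_eq_getElem (by omega)
  set a0 := s[l]'(by omega) with ha0def
  set b0 := s[k + l]'(by omega) with hb0def
  have hab : a0 < b0 := by
    rcases lt_trichotomy a0 b0 with h | h | h
    · exact h
    · exact absurd (by rw [ha0, hb0, h]) hdiff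
    · exact absurd hlt (not_lex_of_diff l s (s.drop k)
        (fun t ht => by rw [List.getElem?_drop]; exact hagree t ht)
        a0 b0 ha0 (by rw [List.getElem?_drop]; exact hb0) h)
  -- Step 1: m ≤ k + l
  have h1 : m ≤ k + l := by
    by_contra hcon
    push_neg at hcon
    have Hk := hIL.2 k hk1 (by rw [List.length_take]; omega)
    refine not_lex_of_diff l _ _ ?_ b0 a0 ?_ ?_ hab Hk
    · intro t ht
      rw [List.getElem?_drop, List.getElem?_take_of_lt (by omega : k + t < m),
        List.getElem?_take_of_lt (by omega : t < m)]
      exact (hagree t ht).symm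
    · rw [List.getElem?_drop, List.getElem?_take_of_lt (by omega : k + l < m)]
      exact hb0
    · rw [List.getElem?_take_of_lt (by omega : l < m)]
      exact ha0
  -- Step 2: ¬ (m < k + l)
  have h2 : ¬ m < k + l := by
    intro hcon
    have hm1L : m + 1 ≤ L := by omega
    have hmax1 := hmax (m + 1) (by omega) hm1L
    unfold IsInvLyndon at hmax1
    push_neg at hmax1
    have hne : s.take (m + 1) ≠ [] := by
      have : (s.take (m + 1)).length = m + 1 := by rw [List.length_take]; omega
      intro hc; rw [hc] at this; simp at this
    obtain ⟨q, hq1, hq2, hq⟩ := hmax1 hne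
    rw [List.length_take] at hq2
    have hqm : q < m + 1 := by omega
    -- p := first difference of s.drop q and s
    obtain ⟨tp1, tp2, tp3, tp4⟩ := lceLen_spec (s.drop q) s
    set p := lceLen (s.drop q) s with hpdef
    rw [List.length_drop] at tp2 tp4
    have hqagree : ∀ t, t < p → s[q + t]? = s[t]? := by
      intro t ht
      rw [← List.getElem?_drop]
      exact tp1 t ht
    -- if p ≥ m + 1 - q : contradiction with hq via prefix
    have hplt : p < m + 1 - q := by
      by_contra hcon2
      push_neg at hcon2
      have hpre : (s.take (m + 1)).drop q <+: s.take (m + 1) := by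
        apply prefix_of_agree
        intro t ht
        rw [List.length_drop, List.length_take] at ht
        have htq : q + t < m + 1 := by omega
        rw [List.getElem?_drop, List.getElem?_take_of_lt htq,
          List.getElem?_take_of_lt (by omega : t < m + 1)]
        exact hqagree t (by omega)
      exact hq (lex_of_prefix _ _ hpre (by
        rw [List.length_drop, List.length_take]; omega))
    have hpLq : p < L - q := by omega
    have hqpL : q + p < L := by omega
    have hdiff2 : s[q + p]? ≠ s[p]? := by
      have := tp4 (by omega) (by omega)
      rw [List.getElem?_drop] at this
      exact this
    have ha1 : s[q + p]? = some (s[q + p]'(by omega)) := List.getElem?_eq_getElem (by omega)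
    have hb1 : s[p]? = some (s[p]'(by omega)) := List.getElem?_eq_getElem (by omega)
    set a1 := s[q + p]'(by omega) with ha1def
    set b1 := s[p]'(by omega) with hb1def
    have hba : b1 < a1 := by
      rcases lt_trichotomy a1 b1 with h | h | h
      · -- drop q smaller at p: Llt ((take (m+1)).drop q) (take (m+1)), contra hq
        exfalso
        apply hq
        refine lex_of_diff p _ _ ?_ a1 b1 ?_ ?_ h
        · intro t ht
          rw [List.getElem?_drop, List.getElem?_take_of_lt (by omega : q + t < m + 1),
            List.getElem?_take_of_lt (by omega : t < m + 1)]
          exact hqagree t ht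
        · rw [List.getElem?_drop, List.getElem?_take_of_lt (by omega : q + p < m + 1)]
          exact ha1
        · rw [List.getElem?_take_of_lt (by omega : p < m + 1)]
          exact hb1
      · exact absurd (by rw [ha1, hb1, h]) hdiff2
      · exact h
    have hsq : Llt s (s.drop q) :=
      lex_of_diff p s (s.drop q)
        (fun t ht => by rw [List.getElem?_drop]; exact (hqagree t ht).symm)
        b1 a1 hb1 (by rw [List.getElem?_drop]; exact ha1) hba
    have hkq : k ≤ q := hmin q hq1 (by omega) hsq
    have hkq' : k < q := by
      rcases Nat.lt_or_ge k q with h | h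
      · exact h
      · exfalso
        have hqk : q = k := by omega
        have hpl : p < l := by omega
        have heq := hagree p hpl
        rw [hqk] at ha1
        rw [ha1, hb1] at heq
        injection heq with heq
        rw [heq] at hba
        exact lt_irrefl _ hba
    set r := q - k with hrdef
    have hr1 : 0 < r := by omega
    have hrq : k + r = q := by omega
    have hrplt : r + p < l := by omega
    have hrm : r < m := by omega
    have Hr := hIL.2 r hr1 (by rw [List.length_take]; omega)
    refine not_lex_of_diff p _ _ ?_ a1 b1 ?_ ?_ hba Hr
    · intro t ht
      have hrtl : r + t < l := by omega
      rw [List.getElem?_drop, List.getElem?_take_of_lt (by omega : r + t < m),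
        List.getElem?_take_of_lt (by omega : t < m)]
      have e1 := hagree (r + t) hrtl
      rw [← Nat.add_assoc, hrq] at e1
      rw [e1]
      exact hqagree t ht
    · rw [List.getElem?_drop, List.getElem?_take_of_lt (by omega : r + p < m)]
      have e1 := hagree (r + p) hrplt
      rw [← Nat.add_assoc, hrq] at e1
      rw [e1]
      exact ha1
    · rw [List.getElem?_take_of_lt (by omega : p < m)]
      exact hb1
  omega

/-- Recovery formula: if the maximal inverse Lyndon subword starting at `i` is a proper
prefix of `x_i` and `j = next₋₁[i]`, then `λ⁻¹[i] = j - i + lce(i, j)`. -/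
theorem invLyndonArray_recovery {α : Type*} [LinearOrder α] (x : List α) (n i m j : ℕ)
    (hn : n = x.length) (hi1 : 1 ≤ i) (hin : i ≤ n)
    (hm1 : 1 ≤ m) (hm2 : m ≤ n - i + 1)
    (hIL : IsInvLyndon (sub x i (i + m - 1)))
    (hmax : ∀ m', m < m' → m' ≤ n - i + 1 → ¬ IsInvLyndon (sub x i (i + m' - 1)))
    (hproper : m < n - i + 1)
    (hj : IsLeast {j' | i < j' ∧ j' ≤ n ∧ Llt (suff x i) (suff x j')} j) :
    m = j - i + lce x i j := by
  obtain ⟨⟨hij, hjn, hjlt⟩, hjmin⟩ := hj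
  set s : List α := x.drop (i - 1) with hsdef
  have hsL : s.length = n - i + 1 := by
    rw [hsdef, List.length_drop]; omega
  set k := j - i with hkdef
  have hsub : ∀ m', 1 ≤ m' → sub x i (i + m' - 1) = s.take m' := by
    intro m' h
    unfold sub
    rw [← hsdef]
    congr 1
    omega
  have hdropq : ∀ q, (suff x (i + q)) = s.drop q := by
    intro q
    unfold suff
    rw [hsdef, List.drop_drop]
    congr 1
    omega
  have hsuffi : suff x i = s := rfl
  have hsuffj : suff x j = s.drop k := by
    have : j = i + k := by omega
    rw [this, hdropq]
  have hlce : lce x i j = lceLen s (s.drop k) := by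
    unfold lce lceLen
    rw [hsuffi, hsuffj]
  have hgoal : m = k + lceLen s (s.drop k) := by
    apply key s k _ m (by omega) (by omega) (by rw [← hsuffj]; exact hjlt)
    · intro q h1 h2 h3
      have hmem : i + q ∈ {j' | i < j' ∧ j' ≤ n ∧ Llt (suff x i) (suff x j')} := by
        refine ⟨by omega, by omega, ?_⟩
        rw [hsuffi, hdropq]
        exact h3
      have := hjmin hmem
      omega
    · rfl
    · omega
    · omega
    · rw [← hsub m hm1]; exact hIL
    · intro m' h h'
      rw [← hsub m' (by omega)]
      exact hmax m' h (by omega)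
  rw [hgoal, hlce]

end LynArr
end

section
/- Let 2 ≤ i ≤ n and suppose the set {j ∈ [1,i) : x_j ≻ x_i} is nonempty, with maximum p. Then the subword x[p..i−1] is an inverse Lyndon word. -/
namespace LynArr

variable {α : Type*} [LinearOrder α]

/-!
For `p < q < i`, maximality of `p` gives `x_q ⪯ x_i ≺ x_p`. Writing `w = x[p..i-1]`, we have
`x_p = w x_i` and `x_q = w' x_i` with `w'` a proper suffix of `w`; since `w'` is shorter than `w`,
the common tail `x_i` cannot decide the comparison, so `w' ≺ w`.
-/

theorem _root_.List.Lex.of_append_right {β : Type*} {r : β → β → Prop} {u v s : List β}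
    (hlen : u.length < v.length) (h : List.Lex r (u ++ s) (v ++ s)) : List.Lex r u v := by
  induction u generalizing v with
  | nil => exact match v, hlen with | _ :: _, _ => .nil
  | cons a u ih =>
    match v, h with
    | _ :: _, .rel hab => exact .rel hab
    | _ :: _, .cons h => exact .cons (ih (by simpa using hlen) h)

theorem length_sub_le {β : Type*} (x : List β) (p j : ℕ) : (sub x p j).length ≤ j - p + 1 :=
  List.length_take_le _ _

theorem sub_ne_nil {β : Type*} {x : List β} {p : ℕ} (j : ℕ) (h : suff x p ≠ []) :
    sub x p j ≠ [] := by
  rw [sub, Ne, List.take_eq_nil_iff]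
  exact not_or.2 ⟨by omega, h⟩

theorem drop_sub {β : Type*} (x : List β) {p j : ℕ} (k : ℕ) (hp : 1 ≤ p) (hpk : p + k ≤ j) :
    (sub x p j).drop k = sub x (p + k) j := by
  simp only [sub, List.drop_take, List.drop_drop]
  congr 2 <;> omega

theorem sub_append_suff {β : Type*} (x : List β) {m i : ℕ} (hm : 1 ≤ m) (hmi : m < i) :
    sub x m (i - 1) ++ suff x i = suff x m := by
  rw [sub, suff, suff, show i - 1 - m + 1 = i - m by omega, show i - 1 = m - 1 + (i - m) by omega,
    ← List.drop_drop, List.take_append_drop]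

theorem sub_prevGreater_isInvLyndon_general {α : Type*} [LinearOrder α] (x : List α) (i p : ℕ)
    (hp : IsGreatest {j | 1 ≤ j ∧ j < i ∧ Llt (suff x i) (suff x j)} p) :
    IsInvLyndon (sub x p (i - 1)) := by
  obtain ⟨⟨hp1, hpi, hxp⟩, hmax⟩ := hp
  refine ⟨sub_ne_nil _ fun h => List.not_lex_nil (h ▸ hxp), fun k hk0 hk => ?_⟩
  have hpk : p + k < i := by have := length_sub_le x p (i - 1); omega
  have hxq : suff x (p + k) < suff x p := by
    refine lt_of_le_of_lt (not_lt.1 fun h => ?_) hxp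
    have := hmax ⟨by omega, hpk, h⟩
    omega
  rw [← sub_append_suff x hp1 hpi, ← sub_append_suff x (by omega) hpk,
    ← drop_sub x (j := i - 1) k hp1 (by omega)] at hxq
  exact hxq.of_append_right (by rw [List.length_drop]; omega)

/-- If `p = prev₋₁[i]` is the greatest `j ∈ [1, i)` with `x_j ≻ x_i`, then
`x[p..i-1]` is an inverse Lyndon word. -/
theorem sub_prevGreater_isInvLyndon {α : Type*} [LinearOrder α] (x : List α) (n i p : ℕ)
    (hn : n = x.length) (hi2 : 2 ≤ i) (hin : i ≤ n)
    (hp : IsGreatest {j | 1 ≤ j ∧ j < i ∧ Llt (suff x i) (suff x j)} p) :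
    IsInvLyndon (sub x p (i - 1)) :=
  sub_prevGreater_isInvLyndon_general x i p hp

end LynArr
end

section
/- (Chain iteration for PGS, part 1.) Assume x[1] > x[k] for every k ∈ (1,n] (so x_1 is the lexicographically greatest suffix and prev₋₁[i] = max{j ∈ [1,i) : x_j ≻ x_i} exists for every i ∈ [2,n]). Define f : [1,n] → [1,n] by f(1) = 1 and f(i) = prev₋₁[i] for i ∈ [2,n]. Then for every r ∈ [2,n] there exists t ≥ 0 such that the t-fold iterate f^t(r−1) equals prev₋₁[r]. -/
/-!
Let `c ∈ (f r, r)`. Since `f r` is the *last* position before `r` whose suffix beats `x_r`, we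
have `x_c ⪯ x_r ≺ x_{f r}`, so `f r` is a candidate for `prev₋₁[c]` and `f r ≤ f c < c`.
Iterating `f` from `r - 1` therefore strictly decreases while staying in `[f r, r)`, and must
hit `f r`. Only negative transitivity of `≺` is needed.
-/

namespace LynArr

variable {α : Type*} [LinearOrder α]

/-- For `R = Llt` and `s = suff x` this says `f i = prev₋₁[i]` on `[2, n]`. -/
def IsPrevGreater {β : Type*} (R : β → β → Prop) (s : ℕ → β) (n : ℕ) (f : ℕ → ℕ) : Prop :=
  ∀ i, 2 ≤ i → i ≤ n → IsGreatest {j | 1 ≤ j ∧ j < i ∧ R (s i) (s j)} (f i)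

namespace IsPrevGreater

variable {β : Type*} {R : β → β → Prop} {s : ℕ → β} {n : ℕ} {f : ℕ → ℕ}

theorem le_apply_of_lt_of_lt [IsOrderConnected β R] (hf : IsPrevGreater R s n f) {r c : ℕ}
    (hr : 2 ≤ r) (hrn : r ≤ n) (hrc : f r < c) (hcr : c < r) : f r ≤ f c ∧ f c < c := by
  obtain ⟨⟨hfr1, -, hRfr⟩, hfr_max⟩ := hf r hr hrn
  obtain ⟨⟨-, hfc, -⟩, hfc_max⟩ := hf c (by omega) (by omega)
  have hRc : R (s c) (s (f r)) := by
    refine (IsOrderConnected.conn _ (s c) _ hRfr).resolve_left fun h => ?_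
    exact absurd (hfr_max ⟨by omega, hcr, h⟩) (by omega)
  exact ⟨hfc_max ⟨hfr1, hrc, hRc⟩, hfc⟩

theorem exists_iterate_eq [IsOrderConnected β R] (hf : IsPrevGreater R s n f) {r : ℕ}
    (hr : 2 ≤ r) (hrn : r ≤ n) : ∀ c, f r ≤ c → c < r → ∃ t, f^[t] c = f r := by
  intro c
  induction c using Nat.strong_induction_on with
  | _ c ih =>
    intro hfrc hcr
    rcases hfrc.eq_or_lt with heq | hlt
    · exact ⟨0, heq.symm⟩
    · obtain ⟨hle, hfc⟩ := hf.le_apply_of_lt_of_lt hr hrn hlt hcr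
      obtain ⟨t, ht⟩ := ih (f c) hfc hle (by omega)
      exact ⟨t + 1, by rw [Function.iterate_succ_apply, ht]⟩

end IsPrevGreater

/-- Chain iteration for PGS, part 1: if `x[1]` is strictly greater than every other
letter of `x` and `f` sends `1` to `1` and every `i ∈ [2, n]` to `prev₋₁[i]`, then for every
`r ∈ [2, n]` some iterate of `f` starting from `r - 1` reaches `prev₋₁[r] = f r`. -/
theorem pgs_chain_iteration {α : Type*} [LinearOrder α] (x : List α) (n : ℕ)
    (f : ℕ → ℕ)
    (hf : ∀ i, 2 ≤ i → i ≤ n →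
      IsGreatest {j | 1 ≤ j ∧ j < i ∧ Llt (suff x i) (suff x j)} (f i)) :
    ∀ r, 2 ≤ r → r ≤ n → ∃ t, f^[t] (r - 1) = f r := by
  intro r hr hrn
  have hprev : IsPrevGreater (List.Lex (· < ·)) (suff x) n f := hf
  have hfr : f r < r := (hf r hr hrn).1.2.1
  exact hprev.exists_iterate_eq hr hrn (r - 1) (by omega) (by omega)

end LynArr
end

section
/- (Chain iteration for NGS/PGS, part 2.) Assume x[1] > x[k] for every k ∈ (1,n], so prev₋₁[i] = max{j ∈ [1,i) : x_j ≻ x_i} exists for every i ∈ [2,n]. Define f : [1,n] → [1,n] by f(1) = 1 and f(i) = prev₋₁[i] for i ∈ [2,n]. Then for all indices l, r with 2 ≤ l < r ≤ n: the set {j ∈ (l,n] : x_j ≻ x_l} is nonempty with minimum equal to r if and only if there exists t ≥ 0 with f^t(r−1) = l and prev₋₁[r] < l. -/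
namespace LynArr

variable {α : Type*} [LinearOrder α]

/-- Chain iteration for NGS/PGS, part 2: under the same assumptions on `x` and `f`
as part 1, for all `2 ≤ l < r ≤ n` we have `next₋₁[l] = r` iff `l` lies on the PGS chain
from `r - 1` and `prev₋₁[r] < l`. -/
theorem ngs_pgs_chain_iteration {α : Type*} [LinearOrder α] (x : List α) (n : ℕ)
    (hn : n = x.length) (f : ℕ → ℕ)
    (hx1 : ∀ k, (h1 : 1 < k) → (h2 : k ≤ n) → x[k - 1]'(by omega) < x[0]'(by omega))
    (hf1 : f 1 = 1)
    (hf : ∀ i, 2 ≤ i → i ≤ n →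
      IsGreatest {j | 1 ≤ j ∧ j < i ∧ Llt (suff x i) (suff x j)} (f i)) :
    ∀ l r, 2 ≤ l → l < r → r ≤ n →
      (IsLeast {j | l < j ∧ j ≤ n ∧ Llt (suff x l) (suff x j)} r ↔
        (∃ t, f^[t] (r - 1) = l) ∧ f r < l) := by
  intro l r hl hlr hrn
  have hlt : ∀ u v : List α, Llt u v ↔ u < v := fun u v => Iff.rfl
  have htrans : ∀ {u v w : List α}, Llt u v → Llt v w → Llt u w := by
    intro u v w h1 h2
    rw [hlt] at *
    exact lt_trans h1 h2
  have hasymm : ∀ {u v : List α}, Llt u v → Llt v u → False := by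
    intro u v h1 h2
    rw [hlt] at *
    exact lt_asymm h1 h2
  have hne : ∀ i j : ℕ, 1 ≤ i → i ≤ n → 1 ≤ j → j ≤ n → i ≠ j →
      suff x i ≠ suff x j := by
    intro i j hi hin hj hjn hij hcon
    have := congrArg List.length hcon
    simp only [suff, List.length_drop] at this
    omega
  have htot : ∀ i j : ℕ, 1 ≤ i → i ≤ n → 1 ≤ j → j ≤ n → i ≠ j →
      ¬ Llt (suff x i) (suff x j) → Llt (suff x j) (suff x i) := by
    intro i j hi hin hj hjn hij h
    rw [hlt] at *
    rcases lt_trichotomy (suff x i) (suff x j) with h1 | h1 | h1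
    · exact absurd h1 h
    · exact absurd h1 (hne i j hi hin hj hjn hij)
    · exact h1
  constructor
  · rintro ⟨⟨hlr', hrn', hllt⟩, hmin⟩
    have hr2 : 2 ≤ r := by omega
    obtain ⟨⟨hfr1, hfr2, hfr3⟩, hmaxr⟩ := hf r hr2 hrn
    have hfrl : f r < l := by
      by_contra h
      push_neg at h
      rcases eq_or_lt_of_le h with h1 | h1
      · exact hasymm hllt (h1 ▸ hfr3)
      · have hc : Llt (suff x l) (suff x (f r)) := htrans hllt hfr3
        have := hmin ⟨h1, by omega, hc⟩
        omega
    refine ⟨?_, hfrl⟩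
    have climb : ∀ m, m < r → l ≤ m → ∃ t, f^[t] m = l := by
      intro m
      induction m using Nat.strong_induction_on with
      | _ m ih =>
        intro hmr hlm
        rcases eq_or_lt_of_le hlm with h1 | h1
        · exact ⟨0, h1.symm⟩
        · have hm2 : 2 ≤ m := by omega
          have hmn : m ≤ n := by omega
          obtain ⟨⟨hfm1, hfm2, hfm3⟩, hmax⟩ := hf m hm2 hmn
          have hnot : ¬ Llt (suff x l) (suff x m) := by
            intro hc
            have := hmin ⟨h1, hmn, hc⟩
            omega
          have hml : Llt (suff x m) (suff x l) :=
            htot l m (by omega) (by omega) (by omega) hmn (by omega) hnot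
          have hlf : l ≤ f m := hmax ⟨by omega, h1, hml⟩
          obtain ⟨t, ht⟩ := ih (f m) hfm2 (by omega) hlf
          exact ⟨t + 1, by rw [Function.iterate_succ_apply, ht]⟩
    exact climb (r - 1) (by omega) (by omega)
  · rintro ⟨⟨t, ht⟩, hfrl⟩
    have hex : ∃ t, f^[t] (r - 1) = l := ⟨t, ht⟩
    have hTl : f^[Nat.find hex] (r - 1) = l := Nat.find_spec hex
    set T := Nat.find hex with hT
    have inv : ∀ s, 1 ≤ f^[s] (r - 1) ∧ f^[s] (r - 1) ≤ r - 1 := by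
      intro s
      induction s with
      | zero => simp; omega
      | succ s ih =>
        rw [Function.iterate_succ_apply']
        rcases eq_or_lt_of_le ih.1 with h1 | h1
        · rw [← h1, hf1]
          omega
        · obtain ⟨ha1, ha2, -⟩ := (hf _ h1 (by omega)).1
          omega
    have dec : ∀ s, f^[s + 1] (r - 1) ≤ f^[s] (r - 1) := by
      intro s
      rw [Function.iterate_succ_apply']
      have h2 := (inv s).2
      rcases eq_or_lt_of_le (inv s).1 with h1 | h1
      · rw [← h1, hf1]
      · obtain ⟨ha1, ha2, -⟩ := (hf _ h1 (by omega)).1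
        omega
    have anti : ∀ s s', s ≤ s' → f^[s'] (r - 1) ≤ f^[s] (r - 1) := by
      intro s s' h
      induction h with
      | refl => exact le_rfl
      | step h ih => exact le_trans (dec _) ih
    have hstrict : ∀ s, s < T → l < f^[s] (r - 1) := by
      intro s hs
      have h1 : f^[T] (r - 1) ≤ f^[s] (r - 1) := anti s T (le_of_lt hs)
      have h2 : f^[s] (r - 1) ≠ l := Nat.find_min hex hs
      omega
    have chain : ∀ s, s ≤ T → ∀ j, f^[s] (r - 1) < j → j ≤ r - 1 →
        Llt (suff x j) (suff x (f^[s] (r - 1))) := by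
      intro s
      induction s with
      | zero => intro _ j hj1 hj2; simp only [Function.iterate_zero_apply] at hj1; omega
      | succ s ih =>
        intro hsT j hj1 hj2
        have hsT' : s < T := by omega
        have ihs := ih (le_of_lt hsT')
        have hml : l < f^[s] (r - 1) := hstrict s hsT'
        have hmn : f^[s] (r - 1) ≤ n := by have := (inv s).2; omega
        obtain ⟨⟨hfm1, hfm2, hfm3⟩, hmax⟩ := hf (f^[s] (r - 1)) (by omega) hmn
        rw [Function.iterate_succ_apply'] at hj1 ⊢
        rcases lt_trichotomy j (f^[s] (r - 1)) with h | h | h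
        · have hnlt : ¬ Llt (suff x (f^[s] (r - 1))) (suff x j) := by
            intro hc
            have := hmax ⟨by omega, h, hc⟩
            omega
          exact htrans (htot (f^[s] (r - 1)) j (by omega) hmn (by omega) (by omega)
            (by omega) hnlt) hfm3
        · rw [h]; exact hfm3
        · exact htrans (ihs j h hj2) hfm3
    have hchainl : ∀ j, l < j → j ≤ r - 1 → Llt (suff x j) (suff x l) := by
      have := chain T le_rfl
      rw [hTl] at this
      exact this
    have hr2 : 2 ≤ r := by omega
    obtain ⟨⟨hfr1, hfr2, hfr3⟩, hmaxr⟩ := hf r hr2 hrn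
    have hllt : Llt (suff x l) (suff x r) := by
      by_contra hc
      have h' := htot l r (by omega) (by omega) (by omega) hrn (by omega) hc
      have := hmaxr ⟨by omega, hlr, h'⟩
      omega
    refine ⟨⟨hlr, hrn, hllt⟩, ?_⟩
    rintro j ⟨hj1, hj2, hj3⟩
    by_contra h
    push_neg at h
    exact hasymm hj3 (hchainl j hj1 (by omega))


end LynArr
end

section
/- (LCE acceleration for NGS/PGS, equal case.) Let 1 ≤ l < k < r ≤ n be indices such that x_l ≻ x_k and x_m ≺ x_k for all m ∈ (l,k), and x_r ≻ x_k and x_m ≺ x_k for all m ∈ (k,r) (i.e., l = prev₋₁[k] and r = next₋₁[k]). If lce(l,k) = lce(k,r), then lce(l,r) ≥ lce(k,r); moreover, either max{j ∈ [1,r) : x_j ≻ x_r} = l or min{j ∈ (l,n] : x_j ≻ x_l} = r. -/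
/-!
Since `x_l` and `x_r` agree with `x_k` on its first `lce(k, r) = lce(l, k)` letters, they agree with
each other there. For the second claim, every suffix starting strictly between `l` and `r` is
`≼ x_k`, hence strictly below both `x_l` and `x_r`; so whichever of `x_l`, `x_r` is smaller has the
other one as its nearest greater suffix on the corresponding side.
-/

namespace LynArr

variable {α : Type*} [LinearOrder α]

theorem llt_iff_lt {u v : List α} : Llt u v ↔ u < v := Iff.rfl

section Lcp

variable {β : Type*} [DecidableEq β]

def lcp (u v : List β) : ℕ := ((u.zip v).takeWhile fun p => p.1 == p.2).length

theorem lcp_le_length_left (u v : List β) : lcp u v ≤ u.length :=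
  calc lcp u v ≤ (u.zip v).length := (List.takeWhile_prefix _).length_le
    _ ≤ u.length := (List.length_zip ..).trans_le (min_le_left _ _)

theorem lcp_le_length_right (u v : List β) : lcp u v ≤ v.length :=
  calc lcp u v ≤ (u.zip v).length := (List.takeWhile_prefix _).length_le
    _ ≤ v.length := (List.length_zip ..).trans_le (min_le_right _ _)

theorem take_lcp_eq (u v : List β) : u.take (lcp u v) = v.take (lcp u v) := by
  induction u generalizing v with
  | nil => simp [lcp]
  | cons a u ih =>
    cases v with
    | nil => simp [lcp]
    | cons b v =>
      by_cases hab : a = b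
      · subst hab
        simpa [lcp, List.takeWhile_cons] using ih v
      · simp [lcp, hab]

theorem le_lcp_of_take_eq {t : ℕ} {u v : List β} (hu : t ≤ u.length) (hv : t ≤ v.length)
    (h : u.take t = v.take t) : t ≤ lcp u v := by
  induction t generalizing u v with
  | zero => exact Nat.zero_le _
  | succ t ih =>
    match u, v with
    | a :: u, b :: v =>
      simp only [List.take_succ_cons, List.cons.injEq] at h
      obtain ⟨rfl, h⟩ := h
      simpa [lcp, List.takeWhile_cons] using
        ih (Nat.le_of_succ_le_succ hu) (Nat.le_of_succ_le_succ hv) h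

theorem min_lcp_le_lcp (u v w : List β) : min (lcp u v) (lcp v w) ≤ lcp u w := by
  set t := min (lcp u v) (lcp v w)
  have huv : u.take t = v.take t := by
    simpa [List.take_take, t] using congrArg (List.take t) (take_lcp_eq u v)
  have hvw : v.take t = w.take t := by
    simpa [List.take_take, t] using congrArg (List.take t) (take_lcp_eq v w)
  exact le_lcp_of_take_eq ((min_le_left _ _).trans (lcp_le_length_left u v))
    ((min_le_right _ _).trans (lcp_le_length_right v w)) (huv.trans hvw)

end Lcp

theorem lce_eq_lcp (x : List α) (i j : ℕ) : lce x i j = lcp (suff x i) (suff x j) := rfl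

theorem suff_ne_suff {β : Type*} {x : List β} {i j : ℕ} (hi : 1 ≤ i) (hij : i < j)
    (hj : j ≤ x.length) :
    suff x i ≠ suff x j := fun h => by
  have := congrArg List.length h
  simp only [suff, List.length_drop] at this
  omega

section Between

variable {β : Type*} [LinearOrder β] {f : ℕ → β} {n l k r : ℕ}

theorem apply_le_of_forall_lt_left_right (hlk : ∀ m, l < m → m < k → f m < f k)
    (hkr : ∀ m, k < m → m < r → f m < f k) {m : ℕ} (hlm : l < m) (hmr : m < r) :
    f m ≤ f k := by
  rcases lt_trichotomy m k with h | rfl | h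
  · exact (hlk m hlm h).le
  · exact le_rfl
  · exact (hkr m h hmr).le

theorem isLeast_of_lt_of_forall_Ioo_le (hlr : l < r) (hrn : r ≤ n) (hfl : f l < f r)
    (hbetween : ∀ m, l < m → m < r → f m ≤ f l) :
    IsLeast {j | l < j ∧ j ≤ n ∧ f l < f j} r := by
  refine ⟨⟨hlr, hrn, hfl⟩, fun j ⟨hlj, _, hj⟩ => ?_⟩
  by_contra! hjr
  exact (hbetween j hlj hjr).not_gt hj

theorem isGreatest_of_lt_of_forall_Ioo_le (hl : 1 ≤ l) (hlr : l < r) (hfr : f r < f l)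
    (hbetween : ∀ m, l < m → m < r → f m ≤ f r) :
    IsGreatest {j | 1 ≤ j ∧ j < r ∧ f r < f j} l := by
  refine ⟨⟨hl, hlr, hfr⟩, fun j ⟨_, hjr, hj⟩ => ?_⟩
  by_contra! hlj
  exact (hbetween j hlj hjr).not_gt hj

end Between

/-- LCE acceleration for NGS/PGS, equal case: with `l = prev₋₁[k]`, `r = next₋₁[k]`
and `lce(l, k) = lce(k, r)`, we get `lce(l, r) ≥ lce(k, r)` and moreover either
`prev₋₁[r] = l` or `next₋₁[l] = r`. -/
theorem lce_acceleration_inverse_eq {α : Type*} [LinearOrder α] (x : List α) (n l k r : ℕ)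
    (hn : n = x.length)
    (hl1 : 1 ≤ l) (hlk : l < k) (hkr : k < r) (hrn : r ≤ n)
    (hlk' : Llt (suff x k) (suff x l))
    (hlk'' : ∀ m, l < m → m < k → Llt (suff x m) (suff x k))
    (hkr' : Llt (suff x k) (suff x r))
    (hkr'' : ∀ m, k < m → m < r → Llt (suff x m) (suff x k))
    (heq : lce x l k = lce x k r) :
    lce x k r ≤ lce x l r ∧
      (IsGreatest {j | 1 ≤ j ∧ j < r ∧ Llt (suff x r) (suff x j)} l ∨
        IsLeast {j | l < j ∧ j ≤ n ∧ Llt (suff x l) (suff x j)} r) := by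
  refine ⟨?_, ?_⟩
  · simpa only [← lce_eq_lcp, heq, min_self] using
      min_lcp_le_lcp (suff x l) (suff x k) (suff x r)
  have hbetween : ∀ m, l < m → m < r → suff x m ≤ suff x k :=
    fun m => apply_le_of_forall_lt_left_right hlk'' hkr''
  rcases lt_or_gt_of_ne (suff_ne_suff hl1 (hlk.trans hkr) (hn ▸ hrn)) with hlr | hrl
  · exact Or.inr <| isLeast_of_lt_of_forall_Ioo_le (hlk.trans hkr) hrn hlr
      fun m hlm hmr => (hbetween m hlm hmr).trans (llt_iff_lt.mp hlk').le
  · exact Or.inl <| isGreatest_of_lt_of_forall_Ioo_le hl1 (hlk.trans hkr) hrl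
      fun m hlm hmr => (hbetween m hlm hmr).trans (llt_iff_lt.mp hkr').le

end LynArr
end

section
/- (LCE acceleration for NGS/PGS, second case.) Let 1 ≤ l < k < r ≤ n be indices such that x_l ≻ x_k and x_m ≺ x_k for all m ∈ (l,k), and x_r ≻ x_k and x_m ≺ x_k for all m ∈ (k,r) (i.e., l = prev₋₁[k] and r = next₋₁[k]). If lce(l,k) < lce(k,r), then lce(l,r) = lce(l,k), x_l ≻ x_r, and max{j ∈ [1,r) : x_j ≻ x_r} = l. -/
/-! Put `p = lce(l, k) < q = lce(k, r)`. As `x_k ≺ x_l` and `p < q ≤ |x_k|`, the word `x_k` is not a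
prefix of `x_l`, so the two first differ at position `p`, with the smaller letter in `x_k`. Since `x_r`
agrees with `x_k` on its first `q > p` letters, it differs from `x_l` at the same position by the same
letter: `lce(l, r) = p` and `x_r ≺ x_l`. Finally every `x_j` with `l < j < r` satisfies
`x_j ≼ x_k ≺ x_r`, so `l` is the last index before `r` whose suffix is larger than `x_r`. -/

namespace LynArr

variable {α : Type*} [LinearOrder α]

section Words

variable {β : Type*} [DecidableEq β]

def lcpLength (u v : List β) : ℕ := ((u.zip v).takeWhile fun p => p.1 == p.2).length

theorem lcpLength_cons_cons (a b : β) (u v : List β) :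
    lcpLength (a :: u) (b :: v) = if a = b then lcpLength u v + 1 else 0 := by
  by_cases h : a = b <;> simp [lcpLength, h]

@[simp]
theorem lcpLength_cons_cons_self (a : β) (u v : List β) :
    lcpLength (a :: u) (a :: v) = lcpLength u v + 1 := by
  simp [lcpLength_cons_cons]

/-- The ultrametric property of the longest common prefix. -/
theorem lcpLength_eq_of_lcpLength_lt {u v w : List β} (h : lcpLength u v < lcpLength v w) :
    lcpLength u w = lcpLength u v := by
  induction u generalizing v w with
  | nil => rfl
  | cons a u ih =>
    match v, w, h with
    | b :: v, c :: w, h =>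
      by_cases hbc : b = c
      · subst hbc
        by_cases hab : a = b
        · subst hab
          simp only [lcpLength_cons_cons_self, add_lt_add_iff_right] at h ⊢
          rw [ih h]
        · simp [lcpLength_cons_cons, hab]
      · simp [lcpLength_cons_cons, hbc] at h

theorem lex_of_lex_of_lcpLength_lt {r : β → β → Prop} {u v w : List β} (hvu : List.Lex r v u)
    (h : lcpLength u v < lcpLength v w) : List.Lex r w u := by
  induction hvu generalizing w with
  | nil => exact absurd h (Nat.not_lt_zero _)
  | @rel b v a u hba =>
    match w, h with
    | c :: w, h =>
      by_cases hbc : b = c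
      · exact hbc ▸ List.Lex.rel hba
      · simp [lcpLength_cons_cons, hbc] at h
  | @cons a v u _ ih =>
    match w, h with
    | c :: w, h =>
      by_cases hac : a = c
      · subst hac
        simp only [lcpLength_cons_cons_self, add_lt_add_iff_right] at h
        exact List.Lex.cons (ih h)
      · simp [lcpLength_cons_cons, hac] at h

end Words

theorem lce_eq_lcpLength (x : List α) (i j : ℕ) : lce x i j = lcpLength (suff x i) (suff x j) :=
  rfl

theorem lt_of_lt_pivot_of_forall_lt_pivot {β : Type*} [Preorder β] (f : ℕ → β) {l k r j : ℕ}
    (hk : f k < f r) (hleft : ∀ m, l < m → m < k → f m < f k)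
    (hright : ∀ m, k < m → m < r → f m < f k) (hlj : l < j) (hjr : j < r) : f j < f r := by
  rcases lt_trichotomy j k with hjk | rfl | hkj
  · exact (hleft j hlj hjk).trans hk
  · exact hk
  · exact (hright j hkj hjr).trans hk

theorem lce_acceleration_inverse_lt_general {α : Type*} [LinearOrder α] (x : List α) (l k r : ℕ)
    (hl1 : 1 ≤ l) (hlk : l < k) (hkr : k < r)
    (hlk' : Llt (suff x k) (suff x l))
    (hlk'' : ∀ m, l < m → m < k → Llt (suff x m) (suff x k))
    (hkr' : Llt (suff x k) (suff x r))
    (hkr'' : ∀ m, k < m → m < r → Llt (suff x m) (suff x k))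
    (hlt : lce x l k < lce x k r) :
    lce x l r = lce x l k ∧ Llt (suff x r) (suff x l) ∧
      IsGreatest {j | 1 ≤ j ∧ j < r ∧ Llt (suff x r) (suff x j)} l := by
  simp only [lce_eq_lcpLength] at hlt ⊢
  have hrl : Llt (suff x r) (suff x l) := lex_of_lex_of_lcpLength_lt hlk' hlt
  refine ⟨lcpLength_eq_of_lcpLength_lt hlt, hrl, ⟨hl1, hlk.trans hkr, hrl⟩, ?_⟩
  rintro j ⟨-, hjr, hrj⟩
  by_contra! hlj
  exact asymm (r := (· < ·)) hrj
    (lt_of_lt_pivot_of_forall_lt_pivot (suff x) hkr' hlk'' hkr'' hlj hjr)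

/-- LCE acceleration for NGS/PGS, second case: with `l = prev₋₁[k]`, `r = next₋₁[k]`
and `lce(l, k) < lce(k, r)`, we get `lce(l, r) = lce(l, k)`, `x_l ≻ x_r`, and
`prev₋₁[r] = l`. -/
theorem lce_acceleration_inverse_lt {α : Type*} [LinearOrder α] (x : List α) (n l k r : ℕ)
    (hn : n = x.length)
    (hl1 : 1 ≤ l) (hlk : l < k) (hkr : k < r) (hrn : r ≤ n)
    (hlk' : Llt (suff x k) (suff x l))
    (hlk'' : ∀ m, l < m → m < k → Llt (suff x m) (suff x k))
    (hkr' : Llt (suff x k) (suff x r))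
    (hkr'' : ∀ m, k < m → m < r → Llt (suff x m) (suff x k))
    (hlt : lce x l k < lce x k r) :
    lce x l r = lce x l k ∧ Llt (suff x r) (suff x l) ∧
      IsGreatest {j | 1 ≤ j ∧ j < r ∧ Llt (suff x r) (suff x j)} l :=
  lce_acceleration_inverse_lt_general x l k r hl1 hlk hkr hlk' hlk'' hkr' hkr'' hlt

end LynArr
end

section
/- (Suffix comparison inside a Lyndon factor.) Let 1 ≤ i < j ≤ n. If j < i + λ[i], where λ[i] is the largest m ∈ [1, n−i+1] such that x[i..i+m−1] is a Lyndon word, then x_i ≺ x_j. -/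
namespace LynArr

variable {α : Type*} [LinearOrder α]

private lemma lex_append_of_length_le {α : Type*} [LinearOrder α] :
    ∀ {u v : List α}, List.Lex (· < ·) u v → v.length ≤ u.length →
      ∀ t : List α, List.Lex (· < ·) (u ++ t) (v ++ t)
  | _, _, List.Lex.nil, hlen, t => by simp at hlen
  | _, _, List.Lex.cons h, hlen, t =>
      List.Lex.cons (lex_append_of_length_le h (by simpa using hlen) t)
  | _, _, List.Lex.rel h, _, t => List.Lex.rel h

/-- Suffix comparison inside a Lyndon factor: if `m = λ[i]` is the largest
`m ∈ [1, n - i + 1]` such that `x[i..i+m-1]` is a Lyndon word and `i < j < i + m`,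
then `x_i ≺ x_j`. -/
theorem suffix_lt_inside_lyndon_factor {α : Type*} [LinearOrder α] (x : List α) (n i j m : ℕ)
    (hn : n = x.length) (hi1 : 1 ≤ i) (hij : i < j) (hjn : j ≤ n)
    (hm1 : 1 ≤ m) (hm2 : m ≤ n - i + 1)
    (hL : IsLyndon (sub x i (i + m - 1)))
    (hmax : ∀ m', m < m' → m' ≤ n - i + 1 → ¬ IsLyndon (sub x i (i + m' - 1)))
    (hjm : j < i + m) :
    Llt (suff x i) (suff x j) := by
  set l : List α := x.drop (i - 1) with hl
  set w : List α := l.take m with hw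
  have hllen : l.length = n - i + 1 := by
    rw [hl, List.length_drop, ← hn]; omega
  have hwlen : w.length = m := by
    rw [hw, List.length_take]; omega
  have hsub : sub x i (i + m - 1) = w := by
    rw [sub, hw, ← hl]
    congr 1
    omega
  set k := j - i with hk
  have hsi : suff x i = w ++ l.drop m := by
    rw [suff, ← hl, hw, List.take_append_drop]
  have hsj : suff x j = w.drop k ++ l.drop m := by
    rw [suff]
    have h1 : x.drop (j - 1) = l.drop k := by
      rw [hl, List.drop_drop]
      congr 1
      omega
    rw [h1]
    conv_lhs => rw [show l = w ++ l.drop m from (List.take_append_drop m l).symm]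
    rw [List.drop_append, hwlen]
    have : k - m = 0 := by omega
    rw [this, List.drop_zero]
  rw [hsi, hsj]
  have hlex : List.Lex (· < ·) w (w.drop k) := by
    have := hL.2 k (by omega) (by rw [hsub] at *; omega)
    rwa [hsub] at this
  exact lex_append_of_length_le hlex (by rw [List.length_drop, hwlen]; omega) _

end LynArr
end

section
/- (Compatibility property of the Lyndon array.) For indices i, j ∈ [1,n], let w_λ(i) = x[i..i+λ[i]−1] denote the maximal Lyndon subword of x starting at i, where λ[i] is the largest m ∈ [1, n−i+1] such that x[i..i+m−1] is a Lyndon word. If w_λ(i) ≺ w_λ(j), then x_i ≺ x_j. -/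
/-!
Induct on the length of `x_i`. Let `u = w_λ(i)` and `v = w_λ(j)`, so `u ≺ v`. If the comparison
is decided at a mismatch, the mismatch persists in `x_i ≺ x_j`. Otherwise `u` is a proper prefix
of `v`: write `x_i = u s'` and `x_j = u t'`. As `v` is Lyndon, `x_j ≺ t'`. The longest Lyndon
prefix `u₂` of `s'` satisfies `u₂ ≼ u`, since for Lyndon words `u ≺ u₂` the word `u u₂` is
again Lyndon, contradicting the maximality of `u`. So `u₂ ≺ v`, induction gives
`s' ≺ x_j ≺ t'`, and hence `x_i = u s' ≺ u t' = x_j`.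
-/

namespace LynArr

variable {α : Type*} [LinearOrder α]

theorem le_of_isPrefix {u v : List α} (h : u <+: v) : u ≤ v := not_lt.mp h.le

theorem append_lt_append_of_lt_of_length_le {u w : List α} (h : u < w)
    (hw : w.length ≤ u.length) (A B : List α) : u ++ A < w ++ B := by
  induction h with
  | nil => simp at hw
  | cons _ ih => exact .cons (ih (by simpa using hw))
  | rel h => exact .rel h

theorem append_lt_of_lt {u y : List α} (z : List α) (h : u < y)
    (hz : ∀ y', y = u ++ y' → z < y') : u ++ z < y := by
  induction h with
  | nil => exact hz _ rfl
  | cons _ ih => exact .cons (ih fun y' hy' => hz y' (by rw [hy', List.cons_append]))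
  | rel h => exact .rel h

theorem isLyndon_of_length_eq_one {w : List α} (h : w.length = 1) : IsLyndon w :=
  ⟨List.ne_nil_of_length_pos (by omega), fun _ hk0 hk => by omega⟩

theorem IsLyndon.length_pos {w : List α} (hw : IsLyndon w) : 0 < w.length :=
  List.length_pos_iff.2 hw.1

theorem IsLyndon.le_drop {w : List α} (hw : IsLyndon w) {k : ℕ} (hk : k < w.length) :
    w ≤ w.drop k := by
  rcases Nat.eq_zero_or_pos k with rfl | hk0
  · rw [List.drop_zero]
  · exact le_of_lt (hw.2 k hk0 hk)

theorem IsLyndon.lt_drop_of_isPrefix {v t : List α} (hv : IsLyndon v) (hvt : v <+: t) {k : ℕ}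
    (hk0 : 0 < k) (hk : k < v.length) : t < t.drop k := by
  obtain ⟨r, rfl⟩ := hvt
  rw [List.drop_append_of_le_length hk.le]
  exact append_lt_append_of_lt_of_length_le (hv.2 k hk0 hk) (by simp) r r

theorem IsLyndon.append {u z : List α} (hu : IsLyndon u) (hz : IsLyndon z) (h : u < z) :
    IsLyndon (u ++ z) := by
  refine ⟨by simp [hu.1], fun k hk0 hk => ?_⟩
  rw [List.drop_append]
  rcases lt_or_ge k u.length with hku | hku
  · exact append_lt_append_of_lt_of_length_le (hu.2 k hk0 hku) (by simp) _ _
  -- A suffix `z'` of `z` satisfies `u ≺ z ≼ z'`, and if `z' = u y'` then `y'` is a proper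
  -- suffix of `z`.
  rw [List.drop_eq_nil_of_le hku, List.nil_append]
  have hk' : k - u.length < z.length := by simp at hk; omega
  have hlt : u < z.drop (k - u.length) := lt_of_lt_of_le h (hz.le_drop hk')
  refine append_lt_of_lt z hlt fun y' hy' => ?_
  have hy : y' = z.drop (k - u.length + u.length) := by rw [← List.drop_drop, hy', List.drop_left]
  have hy'ne : y' ≠ [] := by
    rintro rfl
    rw [List.append_nil] at hy'
    exact lt_irrefl u (by rwa [hy'] at hlt)
  have hlen : k - u.length + u.length < z.length := by
    have := List.length_pos_iff.2 hy'ne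
    rw [hy, List.length_drop] at this
    omega
  rw [hy]
  exact hz.2 _ (by have := hu.length_pos; omega) hlen

/-- For `s = x_i` this is the paper's `w_λ(i)`. -/
structure IsMaxLyndonPrefix (u s : List α) : Prop where
  isPrefix : u <+: s
  isLyndon : IsLyndon u
  length_le : ∀ u', u' <+: s → IsLyndon u' → u'.length ≤ u.length

theorem exists_isMaxLyndonPrefix {s : List α} (hs : s ≠ []) : ∃ u, IsMaxLyndonPrefix u s := by
  classical
  have hs1 : 1 ≤ s.length := List.length_pos_iff.2 hs
  have h1 : IsLyndon (s.take 1) := isLyndon_of_length_eq_one (by simp; omega)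
  refine ⟨s.take (Nat.findGreatest (fun m => IsLyndon (s.take m)) s.length),
    ⟨List.take_prefix _ _, Nat.findGreatest_spec (P := fun m => IsLyndon (s.take m)) hs1 h1,
      fun u' hu' hLu' => ?_⟩⟩
  rw [List.length_take, min_eq_left (Nat.findGreatest_le _)]
  rw [List.prefix_iff_eq_take] at hu'
  exact Nat.le_findGreatest (by rw [hu']; simp) (hu' ▸ hLu')

theorem IsMaxLyndonPrefix.le_of_append {u s v : List α} (hu : IsMaxLyndonPrefix u (u ++ s))
    (hv : IsMaxLyndonPrefix v s) : v ≤ u := by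
  by_contra! huv
  have hlen := hu.length_le (u ++ v) ((List.prefix_append_right_inj u).2 hv.isPrefix)
    (hu.isLyndon.append hv.isLyndon huv)
  have := hv.isLyndon.length_pos
  simp only [List.length_append] at hlen
  omega

theorem IsMaxLyndonPrefix.lt_of_lt {u s v t : List α} (hu : IsMaxLyndonPrefix u s)
    (hv : IsLyndon v) (hvt : v <+: t) (huv : u < v) : s < t := by
  induction hs : s.length using Nat.strong_induction_on generalizing u s with
  | _ n ih =>
  obtain ⟨s', rfl⟩ := hu.isPrefix
  refine append_lt_of_lt s' (lt_of_lt_of_le huv (le_of_isPrefix hvt)) fun t' ht => ?_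
  have hlen : u.length < v.length := by
    by_contra! h
    exact (le_of_isPrefix (List.prefix_of_prefix_length_le hvt ⟨t', ht.symm⟩ h)).not_gt huv
  have htt' : t < t' := by
    have := hv.lt_drop_of_isPrefix hvt hu.isLyndon.length_pos hlen
    rwa [ht, List.drop_left, ← ht] at this
  rcases eq_or_ne s' [] with rfl | hs'
  · exact lt_of_le_of_lt (not_lt.mp (List.nil_le t)) htt'
  obtain ⟨u₂, hu₂⟩ := exists_isMaxLyndonPrefix hs'
  have hs's : s'.length < n := by
    rw [← hs, List.length_append]
    have := hu.isLyndon.length_pos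
    omega
  have hs't : s' < t := ih s'.length hs's hu₂ (lt_of_le_of_lt (hu.le_of_append hu₂) huv) rfl
  exact hs't.trans htt'

theorem isMaxLyndonPrefix_sub {x : List α} {i m : ℕ} (hL : IsLyndon (sub x i (i + m - 1)))
    (hmax : ∀ m', m < m' → m' ≤ x.length - i + 1 → ¬ IsLyndon (sub x i (i + m' - 1))) :
    IsMaxLyndonPrefix (sub x i (i + m - 1)) (suff x i) := by
  refine ⟨List.take_prefix _ _, hL, fun u' hu' hLu' => ?_⟩
  by_contra! hlong
  -- `sub x i (i + m' - 1)` has length `m'` only for `m' ≥ 1` (truncated subtraction).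
  have hpos := hLu'.length_pos
  have hu'len := hu'.length_le
  simp only [sub, suff, List.length_take, List.length_drop] at hlong hu'len
  refine hmax u'.length (by omega) (by omega) ?_
  rwa [sub, show i + u'.length - 1 - i + 1 = u'.length by omega, ← suff,
    ← List.prefix_iff_eq_take.1 hu']

theorem lyndon_array_compatibility_general {α : Type*} [LinearOrder α] (x : List α) (n i j mi mj : ℕ)
    (hn : n = x.length)
    (hLi : IsLyndon (sub x i (i + mi - 1)))
    (hmaxi : ∀ m', mi < m' → m' ≤ n - i + 1 → ¬ IsLyndon (sub x i (i + m' - 1)))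
    (hLj : IsLyndon (sub x j (j + mj - 1)))
    (hlt : Llt (sub x i (i + mi - 1)) (sub x j (j + mj - 1))) :
    Llt (suff x i) (suff x j) := by
  subst hn
  exact (isMaxLyndonPrefix_sub hLi hmaxi).lt_of_lt hLj (List.take_prefix _ _) hlt

/-- Compatibility property of the Lyndon array: if `mᵢ = λ[i]` and `mⱼ = λ[j]` and the
maximal Lyndon subword starting at `i` is lexicographically smaller than the one starting
at `j`, then `x_i ≺ x_j`. -/
theorem lyndon_array_compatibility {α : Type*} [LinearOrder α] (x : List α) (n i j mi mj : ℕ)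
    (hn : n = x.length)
    (hi1 : 1 ≤ i) (hin : i ≤ n) (hj1 : 1 ≤ j) (hjn : j ≤ n)
    (hmi1 : 1 ≤ mi) (hmi2 : mi ≤ n - i + 1)
    (hLi : IsLyndon (sub x i (i + mi - 1)))
    (hmaxi : ∀ m', mi < m' → m' ≤ n - i + 1 → ¬ IsLyndon (sub x i (i + m' - 1)))
    (hmj1 : 1 ≤ mj) (hmj2 : mj ≤ n - j + 1)
    (hLj : IsLyndon (sub x j (j + mj - 1)))
    (hmaxj : ∀ m', mj < m' → m' ≤ n - j + 1 → ¬ IsLyndon (sub x j (j + m' - 1)))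
    (hlt : Llt (sub x i (i + mi - 1)) (sub x j (j + mj - 1))) :
    Llt (suff x i) (suff x j) :=
  lyndon_array_compatibility_general x n i j mi mj hn hLi hmaxi hLj hlt

end LynArr
end
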